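/- arXiv:2210.09571 — 10 statements merged into one kernel-verified Lean document; each statement's English description precedes it below -/
import Mathlib

section
/- For a twice differentiable strictly convex function f:(0,∞)→ℝ with f(1)=0, the binary f-divergence g(t) = ((1-t)/2)·f((1+t)/(1-t)) + ((1+t)/2)·f((1-t)/(1+t)) is strictly increasing on (0,1). -/
open Real Set

/-- The binary f-divergence. -/
noncomputable def gbin (f : ℝ → ℝ) (t : ℝ) : ℝ :=
  ((1 - t) / 2) * f ((1 + t) / (1 - t)) + ((1 + t) / 2) * f ((1 - t) / (1 + t))

theorem binary_f_divergence_strictMono (f : ℝ → ℝ)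
    (hconv : StrictConvexOn ℝ (Ioi (0:ℝ)) f)
    (hd1 : ∀ x ∈ Ioi (0:ℝ), DifferentiableAt ℝ f x)
    (hd2 : ∀ x ∈ Ioi (0:ℝ), DifferentiableAt ℝ (deriv f) x)
    (hf1 : f 1 = 0) :
    StrictMonoOn (gbin f) (Ioo (0:ℝ) 1) := by
  have key : ∀ t ∈ Ioo (0:ℝ) 1,
      HasDerivAt (gbin f)
        (((-1)/2 * f ((1 + t) / (1 - t)) +
          (1 - t) / 2 * (deriv f ((1 + t) / (1 - t)) * (2 / (1 - t) ^ 2))) +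
         (1/2 * f ((1 - t) / (1 + t)) +
          (1 + t) / 2 * (deriv f ((1 - t) / (1 + t)) * (-2 / (1 + t) ^ 2)))) t := by
    intro t ht
    obtain ⟨ht0, ht1⟩ := ht
    have h1t : (0:ℝ) < 1 - t := by linarith
    have h1t' : (0:ℝ) < 1 + t := by linarith
    set a : ℝ := (1 + t) / (1 - t) with ha
    set b : ℝ := (1 - t) / (1 + t) with hb
    have ha0 : a ∈ Ioi (0:ℝ) := by
      simp only [mem_Ioi]; positivity
    have hb0 : b ∈ Ioi (0:ℝ) := by
      simp only [mem_Ioi]; positivity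
    -- derivative of t ↦ (1+t)/(1-t)
    have hu : HasDerivAt (fun s : ℝ => (1 + s) / (1 - s)) (2 / (1 - t) ^ 2) t := by
      have h1 : HasDerivAt (fun s : ℝ => 1 + s) 1 t := (hasDerivAt_id t).const_add 1
      have h2 : HasDerivAt (fun s : ℝ => 1 - s) (-1) t := by
        simpa using (hasDerivAt_id t).const_sub 1
      have : HasDerivAt (fun s : ℝ => (1 + s) / (1 - s)) _ t := h1.div h2 (by linarith)
      convert this using 1
      field_simp
      ring
    have hv : HasDerivAt (fun s : ℝ => (1 - s) / (1 + s)) (-2 / (1 + t) ^ 2) t := by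
      have h1 : HasDerivAt (fun s : ℝ => 1 - s) (-1) t := by
        simpa using (hasDerivAt_id t).const_sub 1
      have h2 : HasDerivAt (fun s : ℝ => 1 + s) 1 t := (hasDerivAt_id t).const_add 1
      have : HasDerivAt (fun s : ℝ => (1 - s) / (1 + s)) _ t := h1.div h2 (by linarith)
      convert this using 1
      field_simp
      ring
    have hfa : HasDerivAt f (deriv f a) a := (hd1 a ha0).hasDerivAt
    have hfb : HasDerivAt f (deriv f b) b := (hd1 b hb0).hasDerivAt
    have hcomp1 : HasDerivAt (fun s : ℝ => f ((1 + s) / (1 - s)))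
        (deriv f a * (2 / (1 - t) ^ 2)) t := hfa.comp t hu
    have hcomp2 : HasDerivAt (fun s : ℝ => f ((1 - s) / (1 + s)))
        (deriv f b * (-2 / (1 + t) ^ 2)) t := hfb.comp t hv
    have hw1 : HasDerivAt (fun s : ℝ => (1 - s) / 2) ((-1)/2) t := by
      have : HasDerivAt (fun s : ℝ => 1 - s) (-1) t := by
        simpa using (hasDerivAt_id t).const_sub 1
      simpa using this.div_const 2
    have hw2 : HasDerivAt (fun s : ℝ => (1 + s) / 2) (1/2) t := by
      have : HasDerivAt (fun s : ℝ => 1 + s) 1 t := (hasDerivAt_id t).const_add 1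
      simpa using this.div_const 2
    have hprod1 := hw1.mul hcomp1
    have hprod2 := hw2.mul hcomp2
    have : HasDerivAt (gbin f) _ t := hprod1.add hprod2
    convert this using 2 <;> ring
  have hpos : ∀ t ∈ Ioo (0:ℝ) 1,
      0 < (((-1)/2 * f ((1 + t) / (1 - t)) +
          (1 - t) / 2 * (deriv f ((1 + t) / (1 - t)) * (2 / (1 - t) ^ 2))) +
         (1/2 * f ((1 - t) / (1 + t)) +
          (1 + t) / 2 * (deriv f ((1 - t) / (1 + t)) * (-2 / (1 + t) ^ 2)))) := by
    intro t ht
    obtain ⟨ht0, ht1⟩ := ht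
    have h1t : (0:ℝ) < 1 - t := by linarith
    have h1t' : (0:ℝ) < 1 + t := by linarith
    set a : ℝ := (1 + t) / (1 - t) with ha
    set b : ℝ := (1 - t) / (1 + t) with hb
    have ha0 : a ∈ Ioi (0:ℝ) := by simp only [mem_Ioi]; positivity
    have hb0 : b ∈ Ioi (0:ℝ) := by simp only [mem_Ioi]; positivity
    have hba : b < a := by
      rw [ha, hb, div_lt_div_iff₀ h1t' h1t]
      nlinarith
    have hab : 0 < a - b := by linarith
    have hs1 : deriv f b < slope f b a :=
      hconv.deriv_lt_slope hb0 ha0 hba (hd1 b hb0)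
    have hs2 : slope f b a < deriv f a :=
      hconv.slope_lt_deriv hb0 ha0 hba (hd1 a ha0)
    rw [slope_def_field] at hs1 hs2
    have hBA : deriv f b < deriv f a := hs1.trans hs2
    have h2 : f a - f b < deriv f a * (a - b) := by
      rw [div_lt_iff₀ hab] at hs2
      linarith
    have hd : a - b = 4 * t / ((1 - t) * (1 + t)) := by
      rw [ha, hb]
      field_simp
      ring
    rw [hd] at h2
    set A := deriv f a
    set B := deriv f b
    set Fa := f a
    set Fb := f b
    rw [← mul_div_assoc, lt_div_iff₀ (by positivity : (0:ℝ) < (1-t)*(1+t))] at h2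
    have goal2 : 0 < (-Fa + Fb) * ((1-t)*(1+t)) + 2 * A * (1+t) - 2 * B * (1-t) := by
      nlinarith [mul_pos h1t (sub_pos.mpr hBA)]
    have hne1 : (1 - t) ≠ 0 := by linarith
    have hne2 : (1 + t) ≠ 0 := by linarith
    rw [show ((-1)/2 * Fa + (1 - t) / 2 * (A * (2 / (1 - t) ^ 2))) +
        (1/2 * Fb + (1 + t) / 2 * (B * (-2 / (1 + t) ^ 2)))
        = ((-Fa + Fb) * ((1-t)*(1+t)) + 2 * A * (1+t) - 2 * B * (1-t)) /
          (2 * ((1-t)*(1+t))) by field_simp; ring]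
    positivity
  apply strictMonoOn_of_deriv_pos (convex_Ioo 0 1)
  · intro t ht
    exact ((key t ht).differentiableAt.continuousAt).continuousWithinAt
  · intro t ht
    rw [interior_Ioo] at ht
    rw [(key t ht).deriv]
    exact hpos t ht
end

section
/- Let f:(0,∞)→ℝ be twice differentiable, strictly convex with f(1)=0, and let g(t) = ((1-t)/2)·f((1+t)/(1-t)) + ((1+t)/2)·f((1-t)/(1+t)) for t ∈ (0,1). Then g'(t) > (1/(1+t))·(f'((1+t)/(1-t)) - f'((1-t)/(1+t))) > 0 for all t ∈ (0,1). -/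
open Real Set

theorem binary_f_divergence_deriv_pos (f : ℝ → ℝ)
    (hconv : StrictConvexOn ℝ (Ioi (0:ℝ)) f)
    (hd1 : ∀ x ∈ Ioi (0:ℝ), DifferentiableAt ℝ f x)
    (hd2 : ∀ x ∈ Ioi (0:ℝ), DifferentiableAt ℝ (deriv f) x)
    (hf1 : f 1 = 0) :
    ∀ t ∈ Ioo (0:ℝ) 1,
      deriv (gbin f) t >
        (1 / (1 + t)) * (deriv f ((1 + t) / (1 - t)) - deriv f ((1 - t) / (1 + t))) ∧
      (1 / (1 + t)) * (deriv f ((1 + t) / (1 - t)) - deriv f ((1 - t) / (1 + t))) > 0 := by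
  intro t ht
  obtain ⟨ht0, ht1⟩ := ht
  have h1t : (0:ℝ) < 1 - t := by linarith
  have h1t' : (0:ℝ) < 1 + t := by linarith
  set u : ℝ := (1 + t) / (1 - t) with hu_def
  set v : ℝ := (1 - t) / (1 + t) with hv_def
  have hu_pos : u ∈ Ioi (0:ℝ) := by
    exact div_pos h1t' h1t
  have hv_pos : v ∈ Ioi (0:ℝ) := by
    exact div_pos h1t h1t'
  have hvu : v < u := by
    rw [hu_def, hv_def, div_lt_div_iff₀ h1t' h1t]
    nlinarith
  -- derivative of inner functions
  have hiu : HasDerivAt (fun s : ℝ => (1 + s) / (1 - s)) (2 / (1 - t)^2) t := by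
    have h := (HasDerivAt.const_add (1:ℝ) (hasDerivAt_id t)).div
      (HasDerivAt.const_sub (1:ℝ) (hasDerivAt_id t)) (by linarith : (1:ℝ) - t ≠ 0)
    refine h.congr_deriv ?_
    simp only [id]
    ring
  have hiv : HasDerivAt (fun s : ℝ => (1 - s) / (1 + s)) (-2 / (1 + t)^2) t := by
    have h := (HasDerivAt.const_sub (1:ℝ) (hasDerivAt_id t)).div
      (HasDerivAt.const_add (1:ℝ) (hasDerivAt_id t)) (by linarith : (1:ℝ) + t ≠ 0)
    refine h.congr_deriv ?_
    simp only [id]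
    ring
  have hfu : HasDerivAt f (deriv f u) u := (hd1 u hu_pos).hasDerivAt
  have hfv : HasDerivAt f (deriv f v) v := (hd1 v hv_pos).hasDerivAt
  have hcu : HasDerivAt (fun s : ℝ => f ((1 + s) / (1 - s)))
      (deriv f u * (2 / (1 - t)^2)) t := hfu.comp t hiu
  have hcv : HasDerivAt (fun s : ℝ => f ((1 - s) / (1 + s)))
      (deriv f v * (-2 / (1 + t)^2)) t := hfv.comp t hiv
  have ha : HasDerivAt (fun s : ℝ => (1 - s) / 2) (-(1:ℝ)/2) t := by
    have h := (HasDerivAt.const_sub (1:ℝ) (hasDerivAt_id t)).div_const 2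
    exact h
  have hb : HasDerivAt (fun s : ℝ => (1 + s) / 2) ((1:ℝ)/2) t := by
    have h := (HasDerivAt.const_add (1:ℝ) (hasDerivAt_id t)).div_const 2
    exact h
  have hg : HasDerivAt (gbin f)
      ((-(1:ℝ)/2) * f u + ((1 - t)/2) * (deriv f u * (2 / (1 - t)^2))
        + (((1:ℝ)/2) * f v + ((1 + t)/2) * (deriv f v * (-2 / (1 + t)^2)))) t := by
    exact (ha.mul hcu).add (hb.mul hcv)
  have hderiv : deriv (gbin f) t =
      (-(1:ℝ)/2) * f u + deriv f u / (1 - t)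
        + ((1:ℝ)/2) * f v - deriv f v / (1 + t) := by
    rw [hg.deriv]
    field_simp
    ring
  -- convexity inequalities
  have hslope1 : deriv f v < slope f v u := hconv.deriv_lt_slope hv_pos hu_pos hvu (hd1 v hv_pos)
  have hslope2 : slope f v u < deriv f u := hconv.slope_lt_deriv hv_pos hu_pos hvu (hd1 u hu_pos)
  have huv : u - v = 4 * t / ((1 - t) * (1 + t)) := by
    rw [hu_def, hv_def]
    field_simp
    ring
  have huv_pos : 0 < u - v := by linarith
  rw [slope_def_field] at hslope1 hslope2
  have key : f u - f v < deriv f u * (4 * t / ((1 - t) * (1 + t))) := by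
    rw [← huv]
    exact (div_lt_iff₀ huv_pos).mp hslope2
  constructor
  · rw [hderiv, gt_iff_lt, ← sub_pos]
    have expand : -(1:ℝ)/2 * f u + deriv f u / (1 - t) + 1/2 * f v - deriv f v / (1 + t)
        - 1 / (1 + t) * (deriv f u - deriv f v)
        = (deriv f u * (4 * t / ((1 - t) * (1 + t))) - (f u - f v)) / 2 := by
      field_simp
      ring
    rw [expand]
    linarith [key]
  · have hmono : deriv f v < deriv f u := lt_trans hslope1 hslope2
    have hpos : 0 < (1:ℝ) / (1 + t) := by positivity
    exact mul_pos hpos (by linarith)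
end

section
/- Let f:(0,∞)→ℝ be twice differentiable, strictly convex with f(1)=0, and define g(t) = ((1-t)/2)·f((1+t)/(1-t)) + ((1+t)/2)·f((1-t)/(1+t)) on [0,1). If t ↦ g'(t)/t is non-decreasing on (0,1), then the square of the inverse function G of g (i.e., T ↦ G(T)²) is concave on the range of g. -/
open Real Set

lemma gbin_diff (f : ℝ → ℝ) (hd1 : ∀ x ∈ Ioi (0:ℝ), DifferentiableAt ℝ f x) :
    ∀ t ∈ Ioo (-1:ℝ) 1, DifferentiableAt ℝ (gbin f) t := by
  intro t ht
  obtain ⟨ht1, ht2⟩ := ht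
  have h1 : (0:ℝ) < 1 - t := by linarith
  have h2 : (0:ℝ) < 1 + t := by linarith
  have hu : (1 + t) / (1 - t) ∈ Ioi (0:ℝ) := div_pos h2 h1
  have hv : (1 - t) / (1 + t) ∈ Ioi (0:ℝ) := div_pos h1 h2
  have di1 : DifferentiableAt ℝ (fun s : ℝ => (1 + s) / (1 - s)) t := by
    exact DifferentiableAt.div (by fun_prop) (by fun_prop) h1.ne'
  have di2 : DifferentiableAt ℝ (fun s : ℝ => (1 - s) / (1 + s)) t := by
    exact DifferentiableAt.div (by fun_prop) (by fun_prop) h2.ne'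
  have d1 : DifferentiableAt ℝ (fun s : ℝ => f ((1 + s) / (1 - s))) t :=
    (hd1 _ hu).comp t di1
  have d2 : DifferentiableAt ℝ (fun s : ℝ => f ((1 - s) / (1 + s))) t :=
    (hd1 _ hv).comp t di2
  exact (DifferentiableAt.mul (by fun_prop) d1).add (DifferentiableAt.mul (by fun_prop) d2)

lemma gbin_zero (f : ℝ → ℝ) (hf1 : f 1 = 0) : gbin f 0 = 0 := by
  simp [gbin, hf1]

lemma gbin_pos (f : ℝ → ℝ) (hconv : StrictConvexOn ℝ (Ioi (0:ℝ)) f) (hf1 : f 1 = 0) :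
    ∀ t ∈ Ioo (0:ℝ) 1, 0 < gbin f t := by
  intro t ⟨ht0, ht1⟩
  have h1 : (0:ℝ) < 1 - t := by linarith
  have h2 : (0:ℝ) < 1 + t := by linarith
  have hu : (1 + t) / (1 - t) ∈ Ioi (0:ℝ) := div_pos h2 h1
  have hv : (1 - t) / (1 + t) ∈ Ioi (0:ℝ) := div_pos h1 h2
  have hne : (1 + t) / (1 - t) ≠ (1 - t) / (1 + t) := by
    have : (1 - t) / (1 + t) < 1 := (div_lt_one h2).2 (by linarith)
    have : (1:ℝ) < (1 + t) / (1 - t) := (one_lt_div h1).2 (by linarith)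
    intro h; rw [h] at this; linarith
  have key := hconv.2 hu hv hne (by positivity : (0:ℝ) < (1 - t)/2)
    (by positivity : (0:ℝ) < (1 + t)/2) (by ring)
  simp only [smul_eq_mul] at key
  have harg : (1 - t)/2 * ((1 + t) / (1 - t)) + (1 + t)/2 * ((1 - t) / (1 + t)) = 1 := by
    field_simp
    ring
  rw [harg, hf1] at key
  simpa [gbin] using key

theorem sq_of_inverse_concave (f G : ℝ → ℝ)
    (hconv : StrictConvexOn ℝ (Ioi (0:ℝ)) f)
    (hd1 : ∀ x ∈ Ioi (0:ℝ), DifferentiableAt ℝ f x)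
    (hd2 : ∀ x ∈ Ioi (0:ℝ), DifferentiableAt ℝ (deriv f) x)
    (hf1 : f 1 = 0)
    (hmono : MonotoneOn (fun t => deriv (gbin f) t / t) (Ioo (0:ℝ) 1))
    (hG : ∀ t ∈ Ico (0:ℝ) 1, G (gbin f t) = t) :
    ConcaveOn ℝ (gbin f '' Ico (0:ℝ) 1) (fun T => (G T) ^ 2) := by
  set g := gbin f with hg
  have hdiff := gbin_diff f hd1
  have hsub : Ico (0:ℝ) 1 ⊆ Ioo (-1:ℝ) 1 := fun x hx => ⟨by linarith [hx.1], hx.2⟩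
  have hcont : ContinuousOn g (Ico (0:ℝ) 1) := fun t ht =>
    (hdiff t (hsub ht)).continuousAt.continuousWithinAt
  -- deriv g > 0 on (0,1)
  have hderiv_pos : ∀ t ∈ Ioo (0:ℝ) 1, 0 < deriv g t := by
    intro t₀ ht₀
    by_contra hle
    push_neg at hle
    have hanti : AntitoneOn g (Icc 0 t₀) := by
      apply antitoneOn_of_deriv_nonpos (convex_Icc _ _)
      · exact hcont.mono (fun x hx => ⟨hx.1, lt_of_le_of_lt hx.2 ht₀.2⟩)
      · intro x hx
        rw [interior_Icc] at hx
        exact (hdiff x ⟨by linarith [hx.1], by linarith [hx.2, ht₀.2]⟩).differentiableWithinAt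
      · intro x hx
        rw [interior_Icc] at hx
        have hx' : x ∈ Ioo (0:ℝ) 1 := ⟨hx.1, lt_trans hx.2 ht₀.2⟩
        have := hmono hx' ht₀ hx.2.le
        have h2 : deriv g t₀ / t₀ ≤ 0 := div_nonpos_of_nonpos_of_nonneg hle ht₀.1.le
        have h3 : deriv g x / x ≤ 0 := le_trans this h2
        have h4 : deriv g x / x * x ≤ 0 := mul_nonpos_of_nonpos_of_nonneg h3 hx.1.le
        rwa [div_mul_cancel₀ _ hx.1.ne'] at h4
    have hle2 := hanti (left_mem_Icc.2 ht₀.1.le) (right_mem_Icc.2 ht₀.1.le) ht₀.1.le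
    have h0 : g 0 = 0 := gbin_zero f hf1
    have hpos : 0 < g t₀ := gbin_pos f hconv hf1 t₀ ht₀
    linarith
  -- g strictly monotone on [0,1)
  have hsm : StrictMonoOn g (Ico (0:ℝ) 1) := by
    apply strictMonoOn_of_deriv_pos (convex_Ico _ _) hcont
    intro x hx
    rw [interior_Ico] at hx
    exact hderiv_pos x hx
  -- h : s ↦ g(√s) convex on [0,1)
  set h : ℝ → ℝ := fun s => g (Real.sqrt s) with hh
  have hsqrt_maps : MapsTo Real.sqrt (Ico (0:ℝ) 1) (Ico (0:ℝ) 1) := by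
    intro s hs
    exact ⟨Real.sqrt_nonneg s, by
      rw [show (1:ℝ) = Real.sqrt 1 by simp]
      exact Real.sqrt_lt_sqrt hs.1 hs.2⟩
  have hhderiv : ∀ s ∈ Ioo (0:ℝ) 1, HasDerivAt h (deriv g (Real.sqrt s) / Real.sqrt s / 2) s := by
    intro s hs
    have hs0 : 0 < s := hs.1
    have hsq : Real.sqrt s ∈ Ioo (0:ℝ) 1 := by
      constructor
      · exact Real.sqrt_pos.2 hs0
      · rw [show (1:ℝ) = Real.sqrt 1 by simp]
        exact Real.sqrt_lt_sqrt hs0.le hs.2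
    have hg' : HasDerivAt g (deriv g (Real.sqrt s)) (Real.sqrt s) :=
      (hdiff _ ⟨by linarith [hsq.1], hsq.2⟩).hasDerivAt
    have hs' : HasDerivAt Real.sqrt (1 / (2 * Real.sqrt s)) s :=
      Real.hasDerivAt_sqrt hs0.ne'
    have := hg'.comp s hs'
    rw [show deriv g (Real.sqrt s) / Real.sqrt s / 2 = deriv g (Real.sqrt s) * (1 / (2 * Real.sqrt s)) by
      rw [mul_one_div, div_div, mul_comm]]
    exact this
  have hhconv : ConvexOn ℝ (Ico (0:ℝ) 1) h := by
    apply MonotoneOn.convexOn_of_deriv (convex_Ico _ _)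
    · exact hcont.comp (Real.continuous_sqrt.continuousOn) hsqrt_maps
    · intro s hs
      rw [interior_Ico] at hs
      exact ((hhderiv s hs).differentiableAt).differentiableWithinAt
    · rw [interior_Ico]
      intro s₁ hs₁ s₂ hs₂ hle
      rw [(hhderiv s₁ hs₁).deriv, (hhderiv s₂ hs₂).deriv]
      have hsq : ∀ s ∈ Ioo (0:ℝ) 1, Real.sqrt s ∈ Ioo (0:ℝ) 1 := by
        intro s hs
        exact ⟨Real.sqrt_pos.2 hs.1, by
          rw [show (1:ℝ) = Real.sqrt 1 by simp]
          exact Real.sqrt_lt_sqrt hs.1.le hs.2⟩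
      have := hmono (hsq s₁ hs₁) (hsq s₂ hs₂) (Real.sqrt_le_sqrt hle)
      linarith
  -- the image set is convex
  have himg_conv : Convex ℝ (g '' Ico (0:ℝ) 1) := by
    rw [convex_iff_ordConnected]
    exact ((isPreconnected_Ico).image g hcont).ordConnected
  constructor
  · exact himg_conv
  · rintro x ⟨t₁, ht₁, rfl⟩ y ⟨t₂, ht₂, rfl⟩ a b ha hb hab
    have hz : a • g t₁ + b • g t₂ ∈ g '' Ico (0:ℝ) 1 :=
      himg_conv ⟨t₁, ht₁, rfl⟩ ⟨t₂, ht₂, rfl⟩ ha hb hab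
    obtain ⟨t, ht, hgt⟩ := hz
    rw [← hgt]
    simp only [hG t ht, hG t₁ ht₁, hG t₂ ht₂]
    -- goal: a • t₁ ^ 2 + b • t₂ ^ 2 ≤ t ^ 2
    have hsq_mem : ∀ s : ℝ, s ∈ Ico (0:ℝ) 1 → s ^ 2 ∈ Ico (0:ℝ) 1 := by
      intro s hs
      constructor
      · positivity
      · calc s ^ 2 = s * s := sq s
          _ < 1 * 1 := by
            rcases eq_or_lt_of_le hs.1 with h | h
            · rw [← h]; norm_num
            · exact mul_lt_mul' hs.2.le hs.2 hs.1 one_pos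
          _ = 1 := by norm_num
    have hkey := hhconv.2 (hsq_mem t₁ ht₁) (hsq_mem t₂ ht₂) ha hb hab
    have hht : ∀ s ∈ Ico (0:ℝ) 1, h (s ^ 2) = g s := by
      intro s hs
      simp only [hh]
      rw [Real.sqrt_sq hs.1]
    rw [hht t₁ ht₁, hht t₂ ht₂] at hkey
    -- hkey : h (a • t₁^2 + b • t₂^2) ≤ a • g t₁ + b • g t₂ = g t = h (t^2)
    rw [← hgt, ← hht t ht] at hkey
    -- h strictly mono on Ico 0 1
    have hhsm : StrictMonoOn h (Ico (0:ℝ) 1) := by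
      intro s₁ hs₁ s₂ hs₂ hlt
      exact hsm (hsqrt_maps hs₁) (hsqrt_maps hs₂) (Real.sqrt_lt_sqrt hs₁.1 hlt)
    have hmem : a • t₁ ^ 2 + b • t₂ ^ 2 ∈ Ico (0:ℝ) 1 :=
      (convex_Ico (0:ℝ) 1) (hsq_mem t₁ ht₁) (hsq_mem t₂ ht₂) ha hb hab
    exact (hhsm.le_iff_le hmem (hsq_mem t ht)).1 hkey
end

section
/- Let f:(0,∞)→ℝ be twice differentiable, strictly convex with f(1)=0, with binary f-divergence g(t) = ((1-t)/2)·f((1+t)/(1-t)) + ((1+t)/2)·f((1-t)/(1+t)), and suppose g'(t)/t is non-decreasing on (0,1). Then for any two probability measures P, Q (with densities p, q with respect to a dominating measure μ) and d = Δ(P,Q) the triangular discrimination, (1/2)(D_f(P‖Q) + D_f(Q‖P)) ≥ g(√d). -/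
open Real Set MeasureTheory

private lemma gbin_eval_aux (f : ℝ → ℝ) {a b : ℝ} (ha : 0 < a) (hb : 0 < b) :
    ((a + b) / 2) * gbin f ((a - b) / (a + b)) = (b * f (a / b) + a * f (b / a)) / 2 := by
  have hab : (0:ℝ) < a + b := by linarith
  have e1 : 1 - (a - b) / (a + b) = 2 * b / (a + b) := by field_simp; ring
  have e2 : 1 + (a - b) / (a + b) = 2 * a / (a + b) := by field_simp; ring
  unfold gbin
  rw [e1, e2]
  have e3 : (2 * a / (a + b)) / (2 * b / (a + b)) = a / b := by
    field_simp
  have e4 : (2 * b / (a + b)) / (2 * a / (a + b)) = b / a := by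
    field_simp
  rw [e3, e4]
  field_simp

private lemma gbin_eval (f : ℝ → ℝ) {a b : ℝ} (ha : 0 < a) (hb : 0 < b) :
    ((a + b) / 2) * gbin f (|(a - b) / (a + b)|) = (b * f (a / b) + a * f (b / a)) / 2 := by
  have hab : (0:ℝ) < a + b := by linarith
  rcases le_total b a with hba | hba
  · rw [abs_of_nonneg (div_nonneg (by linarith) hab.le)]
    exact gbin_eval_aux f ha hb
  · rw [abs_of_nonpos (div_nonpos_of_nonpos_of_nonneg (by linarith) hab.le)]
    have e : -((a - b) / (a + b)) = (b - a) / (a + b) := by ring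
    rw [e]
    have := gbin_eval_aux f hb ha
    rw [add_comm b a] at this
    linarith

private lemma gbin_diff_s4 (f : ℝ → ℝ) (hd1 : ∀ x ∈ Ioi (0:ℝ), DifferentiableAt ℝ f x)
    {u : ℝ} (hu1 : -1 < u) (hu2 : u < 1) : DifferentiableAt ℝ (gbin f) u := by
  have h1 : (0:ℝ) < 1 - u := by linarith
  have h2 : (0:ℝ) < 1 + u := by linarith
  have dinner1 : DifferentiableAt ℝ (fun t : ℝ => (1 + t) / (1 - t)) u :=
    DifferentiableAt.div (by fun_prop) (by fun_prop) h1.ne'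
  have dinner2 : DifferentiableAt ℝ (fun t : ℝ => (1 - t) / (1 + t)) u :=
    DifferentiableAt.div (by fun_prop) (by fun_prop) h2.ne'
  have m1 : (1 + u) / (1 - u) ∈ Ioi (0:ℝ) := by
    exact div_pos h2 h1
  have m2 : (1 - u) / (1 + u) ∈ Ioi (0:ℝ) := by
    exact div_pos h1 h2
  have c1 : DifferentiableAt ℝ (fun t : ℝ => f ((1 + t) / (1 - t))) u := by
    exact (hd1 _ m1).comp u dinner1
  have c2 : DifferentiableAt ℝ (fun t : ℝ => f ((1 - t) / (1 + t))) u := by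
    exact (hd1 _ m2).comp u dinner2
  unfold gbin
  exact (DifferentiableAt.mul (by fun_prop) c1).add (DifferentiableAt.mul (by fun_prop) c2)

private lemma tangent_line (f : ℝ → ℝ) (hd1 : ∀ x ∈ Ioi (0:ℝ), DifferentiableAt ℝ f x)
    (hmono : MonotoneOn (fun t => deriv (gbin f) t / t) (Ioo (0:ℝ) 1))
    {d s : ℝ} (hd : d ∈ Ioo (0:ℝ) 1) (hs : s ∈ Ico (0:ℝ) 1) :
    gbin f (Real.sqrt d) + (deriv (gbin f) (Real.sqrt d) / (2 * Real.sqrt d)) * (s - d)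
      ≤ gbin f (Real.sqrt s) := by
  set H : ℝ → ℝ := fun s => gbin f (Real.sqrt s) with hH
  set H' : ℝ → ℝ := fun s => deriv (gbin f) (Real.sqrt s) / (2 * Real.sqrt s) with hH'
  have hsqrt_mem : ∀ x : ℝ, x ∈ Ioo (0:ℝ) 1 → Real.sqrt x ∈ Ioo (0:ℝ) 1 := by
    intro x hx
    exact ⟨Real.sqrt_pos.2 hx.1, (Real.sqrt_lt' one_pos).2 (by nlinarith [hx.2])⟩
  have hderiv : ∀ x ∈ Ioo (0:ℝ) 1, HasDerivAt H (H' x) x := by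
    intro x hx
    have hu := hsqrt_mem x hx
    have hg := (gbin_diff_s4 f hd1 (by linarith [hu.1]) hu.2).hasDerivAt
    have hsq := Real.hasDerivAt_sqrt hx.1.ne'
    have h2 := hg.comp x hsq
    have e : H' x = deriv (gbin f) (Real.sqrt x) * (1 / (2 * Real.sqrt x)) := by
      rw [hH']; ring
    rw [e]
    exact h2
  have hmonoH : ∀ x ∈ Ioo (0:ℝ) 1, ∀ y ∈ Ioo (0:ℝ) 1, x ≤ y → H' x ≤ H' y := by
    intro x hx y hy hxy
    have hux := hsqrt_mem x hx
    have huy := hsqrt_mem y hy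
    have h : deriv (gbin f) (Real.sqrt x) / Real.sqrt x
        ≤ deriv (gbin f) (Real.sqrt y) / Real.sqrt y := hmono hux huy (Real.sqrt_le_sqrt hxy)
    have ex : H' x = (deriv (gbin f) (Real.sqrt x) / Real.sqrt x) / 2 := by
      rw [hH']; ring
    have ey : H' y = (deriv (gbin f) (Real.sqrt y) / Real.sqrt y) / 2 := by
      rw [hH']; ring
    rw [ex, ey]
    linarith
  have hcont : ∀ x ∈ Ico (0:ℝ) 1, ContinuousAt H x := by
    intro x hx
    have hux : Real.sqrt x < 1 := (Real.sqrt_lt' one_pos).2 (by nlinarith [hx.2])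
    have hg : ContinuousAt (gbin f) (Real.sqrt x) :=
      (gbin_diff_s4 f hd1 (by nlinarith [Real.sqrt_nonneg x]) hux).continuousAt
    exact hg.comp Real.continuous_sqrt.continuousAt
  show H d + H' d * (s - d) ≤ H s
  rcases lt_trichotomy s d with hlt | heqq | hgt
  · obtain ⟨ξ, hξ, hslope⟩ := exists_hasDerivAt_eq_slope H H' hlt
      (fun x hx => (hcont x ⟨le_trans hs.1 hx.1, lt_of_le_of_lt hx.2 hd.2⟩).continuousWithinAt)
      (fun x hx => hderiv x ⟨lt_of_le_of_lt hs.1 hx.1, lt_trans hx.2 hd.2⟩)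
    have hξm : ξ ∈ Ioo (0:ℝ) 1 := ⟨lt_of_le_of_lt hs.1 hξ.1, lt_trans hξ.2 hd.2⟩
    have hle : H' ξ ≤ H' d := hmonoH ξ hξm d hd hξ.2.le
    have hne : (0:ℝ) < d - s := by linarith
    have heq : H' ξ * (d - s) = H d - H s := (eq_div_iff hne.ne').1 hslope
    have hmul : H' ξ * (d - s) ≤ H' d * (d - s) := mul_le_mul_of_nonneg_right hle hne.le
    have e : H' d * (s - d) = -(H' d * (d - s)) := by ring
    linarith
  · rw [heqq]; simp
  · obtain ⟨ξ, hξ, hslope⟩ := exists_hasDerivAt_eq_slope H H' hgt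
      (fun x hx => (hcont x ⟨le_trans hd.1.le hx.1, lt_of_le_of_lt hx.2 hs.2⟩).continuousWithinAt)
      (fun x hx => hderiv x ⟨lt_trans hd.1 hx.1, lt_trans hx.2 hs.2⟩)
    have hξm : ξ ∈ Ioo (0:ℝ) 1 := ⟨lt_trans hd.1 hξ.1, lt_trans hξ.2 hs.2⟩
    have hle : H' d ≤ H' ξ := hmonoH d hd ξ hξm hξ.1.le
    have hne : (0:ℝ) < s - d := by linarith
    have heq : H' ξ * (s - d) = H s - H d := (eq_div_iff hne.ne').1 hslope
    have hmul : H' d * (s - d) ≤ H' ξ * (s - d) := mul_le_mul_of_nonneg_right hle hne.le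
    linarith

theorem symmetrized_fdiv_ge_gbin_sqrt_triangular {X : Type*} [MeasurableSpace X]
    (μ : Measure X) (f : ℝ → ℝ)
    (hconv : StrictConvexOn ℝ (Ioi (0:ℝ)) f)
    (hd1 : ∀ x ∈ Ioi (0:ℝ), DifferentiableAt ℝ f x)
    (hd2 : ∀ x ∈ Ioi (0:ℝ), DifferentiableAt ℝ (deriv f) x)
    (hf1 : f 1 = 0)
    (hmono : MonotoneOn (fun t => deriv (gbin f) t / t) (Ioo (0:ℝ) 1))
    (p q : X → ℝ) (hpm : Measurable p) (hqm : Measurable q)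
    (hp : ∀ x, 0 < p x) (hq : ∀ x, 0 < q x)
    (hp1 : ∫ x, p x ∂μ = 1) (hq1 : ∫ x, q x ∂μ = 1)
    (hIpq : Integrable (fun x => q x * f (p x / q x)) μ)
    (hIqp : Integrable (fun x => p x * f (q x / p x)) μ)
    (hIΔ : Integrable (fun x => (p x - q x) ^ 2 / (p x + q x)) μ) :
    (1 / 2) * ((∫ x, q x * f (p x / q x) ∂μ) + (∫ x, p x * f (q x / p x) ∂μ))
      ≥ gbin f (Real.sqrt ((1 / 2) * ∫ x, (p x - q x) ^ 2 / (p x + q x) ∂μ)) := by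
  -- basic integrability
  have hip : Integrable p μ := by
    by_contra hc; rw [integral_undef hc] at hp1; norm_num at hp1
  have hiq : Integrable q μ := by
    by_contra hc; rw [integral_undef hc] at hq1; norm_num at hq1
  have hm : Integrable (fun x => (p x + q x) / 2) μ := (hip.add hiq).div_const 2
  have hm1 : (∫ x, (p x + q x) / 2 ∂μ) = 1 := by
    rw [integral_div, integral_add hip hiq, hp1, hq1]; norm_num
  set d : ℝ := (1 / 2) * ∫ x, (p x - q x) ^ 2 / (p x + q x) ∂μ with hd_def
  -- pointwise identities
  have hpq : ∀ x, (0:ℝ) < p x + q x := fun x => by linarith [hp x, hq x]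
  have E1 : ∀ x, (p x + q x) / 2 *
      gbin f (Real.sqrt (((p x - q x) / (p x + q x)) ^ 2))
      = (q x * f (p x / q x) + p x * f (q x / p x)) / 2 := by
    intro x
    rw [Real.sqrt_sq_eq_abs]
    exact gbin_eval f (hp x) (hq x)
  have E2 : ∀ x, (p x + q x) / 2 * ((p x - q x) / (p x + q x)) ^ 2
      = (p x - q x) ^ 2 / (p x + q x) / 2 := by
    intro x
    have := hpq x
    field_simp
  have hSub : ∀ x, ((p x - q x) / (p x + q x)) ^ 2 ∈ Ico (0:ℝ) 1 := by
    intro x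
    constructor
    · positivity
    · rw [div_pow, div_lt_one (pow_pos (hpq x) 2)]
      nlinarith [hp x, hq x, mul_pos (hp x) (hq x)]
  -- the LHS as an integral
  have hupperInt : Integrable (fun x => (q x * f (p x / q x) + p x * f (q x / p x)) / 2) μ :=
    (hIpq.add hIqp).div_const 2
  have hLHS : (1 / 2) * ((∫ x, q x * f (p x / q x) ∂μ) + (∫ x, p x * f (q x / p x) ∂μ))
      = ∫ x, (q x * f (p x / q x) + p x * f (q x / p x)) / 2 ∂μ := by
    rw [integral_div, integral_add hIpq hIqp]; ring
  -- d facts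
  have hd0 : 0 ≤ d := by
    rw [hd_def]
    have : 0 ≤ ∫ x, (p x - q x) ^ 2 / (p x + q x) ∂μ :=
      integral_nonneg fun x => div_nonneg (sq_nonneg _) (hpq x).le
    linarith
  have hμne : μ ≠ 0 := by
    intro h; rw [h, integral_zero_measure] at hp1; norm_num at hp1
  have hd1' : d < 1 := by
    have hInt2 : Integrable (fun x => (p x - q x) ^ 2 / (p x + q x) / 2) μ := hIΔ.div_const 2
    have hpos : 0 < ∫ x, ((p x + q x) / 2 - (p x - q x) ^ 2 / (p x + q x) / 2) ∂μ := by
      have hptw : ∀ x, 0 < (p x + q x) / 2 - (p x - q x) ^ 2 / (p x + q x) / 2 := by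
        intro x
        have h' : (p x - q x) ^ 2 / (p x + q x) < p x + q x := by
          rw [div_lt_iff₀ (hpq x)]
          nlinarith [mul_pos (hp x) (hq x)]
        linarith
      rw [integral_pos_iff_support_of_nonneg (fun x => (hptw x).le) (hm.sub hInt2)]
      have : Function.support (fun x => (p x + q x) / 2 - (p x - q x) ^ 2 / (p x + q x) / 2)
          = univ := by
        ext x; simp [Function.mem_support, (hptw x).ne']
      rw [this]
      exact Measure.measure_univ_pos.2 hμne
    have : (∫ x, ((p x + q x) / 2 - (p x - q x) ^ 2 / (p x + q x) / 2) ∂μ) = 1 - d := by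
      rw [integral_sub hm hInt2, hm1, integral_div, hd_def]; ring
    linarith [this ▸ hpos]
  rcases eq_or_lt_of_le hd0 with hdz | hdpos
  · -- d = 0 case
    rw [ge_iff_le, ← hdz, Real.sqrt_zero]
    have hg0 : gbin f 0 = 0 := by
      unfold gbin; norm_num [hf1]
    rw [hg0, hLHS]
    apply integral_nonneg
    intro x
    simp only [Pi.zero_apply]
    have := hp x; have := hq x; have hpqx := hpq x
    have hm1' : p x / q x ∈ Ioi (0:ℝ) := div_pos (hp x) (hq x)
    have hm2' : q x / p x ∈ Ioi (0:ℝ) := div_pos (hq x) (hp x)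
    have ha : (0:ℝ) ≤ q x / (p x + q x) := by positivity
    have hb : (0:ℝ) ≤ p x / (p x + q x) := by positivity
    have hab : q x / (p x + q x) + p x / (p x + q x) = 1 := by field_simp; ring
    have hc := hconv.convexOn.2 hm1' hm2' ha hb hab
    have hcombo : (q x / (p x + q x)) • (p x / q x) + (p x / (p x + q x)) • (q x / p x)
        = 1 := by
      simp only [smul_eq_mul]
      field_simp
    rw [hcombo, hf1] at hc
    simp only [smul_eq_mul] at hc
    have e : (p x + q x) * (q x / (p x + q x) * f (p x / q x)
        + p x / (p x + q x) * f (q x / p x))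
        = q x * f (p x / q x) + p x * f (q x / p x) := by
      field_simp
    nlinarith [mul_le_mul_of_nonneg_left hc hpqx.le]
  · -- d > 0 case
    set c : ℝ := deriv (gbin f) (Real.sqrt d) / (2 * Real.sqrt d) with hc_def
    have hdIoo : d ∈ Ioo (0:ℝ) 1 := ⟨hdpos, hd1'⟩
    have hptw : ∀ x, (p x + q x) / 2 * (gbin f (Real.sqrt d)
        + c * (((p x - q x) / (p x + q x)) ^ 2 - d))
        ≤ (q x * f (p x / q x) + p x * f (q x / p x)) / 2 := by
      intro x
      rw [← E1 x]
      apply mul_le_mul_of_nonneg_left _ (by linarith [hpq x] : (0:ℝ) ≤ (p x + q x) / 2)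
      exact tangent_line f hd1 hmono hdIoo (hSub x)
    have eL : ∀ x, (p x + q x) / 2 * (gbin f (Real.sqrt d)
        + c * (((p x - q x) / (p x + q x)) ^ 2 - d))
        = (gbin f (Real.sqrt d) - c * d) * ((p x + q x) / 2)
          + c * ((p x - q x) ^ 2 / (p x + q x) / 2) := by
      intro x
      rw [← E2 x]
      ring
    have hLInt : Integrable (fun x => (p x + q x) / 2 * (gbin f (Real.sqrt d)
        + c * (((p x - q x) / (p x + q x)) ^ 2 - d))) μ := by
      have : Integrable (fun x => (gbin f (Real.sqrt d) - c * d) * ((p x + q x) / 2)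
          + c * ((p x - q x) ^ 2 / (p x + q x) / 2)) μ :=
        (hm.const_mul _).add ((hIΔ.div_const 2).const_mul c)
      exact this.congr (Filter.Eventually.of_forall fun x => (eL x).symm)
    have hLval : (∫ x, (p x + q x) / 2 * (gbin f (Real.sqrt d)
        + c * (((p x - q x) / (p x + q x)) ^ 2 - d)) ∂μ) = gbin f (Real.sqrt d) := by
      have : (fun x => (p x + q x) / 2 * (gbin f (Real.sqrt d)
          + c * (((p x - q x) / (p x + q x)) ^ 2 - d)))
          = fun x => (gbin f (Real.sqrt d) - c * d) * ((p x + q x) / 2)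
            + c * ((p x - q x) ^ 2 / (p x + q x) / 2) := funext eL
      rw [this, integral_add (hm.const_mul _) ((hIΔ.div_const 2).const_mul c),
        integral_const_mul, integral_const_mul, hm1, integral_div, hd_def]
      ring
    rw [ge_iff_le, hLHS, ← hLval]
    exact integral_mono hLInt hupperInt hptw
end

section
/- Under the hypotheses of the previous statement, if additionally σ_P = σ_Q = σ, then the infimum g(r) with r = |a|/√(4σ² + a²) is attained: there exists a pair of two-element probability measures (R_r, R_r†) on ℝ with means m_P, m_Q and common variance σ² such that (1/2)(D_f(R_r‖R_r†) + D_f(R_r†‖R_r)) = g(r). -/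
open Real Set

theorem lower_bound_attained_equal_variances (f : ℝ → ℝ)
    (hconv : StrictConvexOn ℝ (Ioi (0:ℝ)) f)
    (hd1 : ∀ x ∈ Ioi (0:ℝ), DifferentiableAt ℝ f x)
    (hd2 : ∀ x ∈ Ioi (0:ℝ), DifferentiableAt ℝ (deriv f) x)
    (hf1 : f 1 = 0)
    (hmono : MonotoneOn (fun t => deriv (gbin f) t / t) (Ioo (0:ℝ) 1))
    (mP mQ σ : ℝ) (hσ : 0 < σ) :
    ∃ y₁ y₂ : ℝ,
      let a := mP - mQ
      let r := |a| / Real.sqrt (4 * σ ^ 2 + a ^ 2)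
      -- R_r = ((1-r)/2, (1+r)/2) on {y₁, y₂} has mean m_P and variance σ²
      ((1 - r) / 2) * y₁ + ((1 + r) / 2) * y₂ = mP ∧
      ((1 - r) / 2) * (y₁ - mP) ^ 2 + ((1 + r) / 2) * (y₂ - mP) ^ 2 = σ ^ 2 ∧
      -- R_r† = ((1+r)/2, (1-r)/2) on {y₁, y₂} has mean m_Q and variance σ²
      ((1 + r) / 2) * y₁ + ((1 - r) / 2) * y₂ = mQ ∧
      ((1 + r) / 2) * (y₁ - mQ) ^ 2 + ((1 - r) / 2) * (y₂ - mQ) ^ 2 = σ ^ 2 ∧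
      -- and the symmetrized f-divergence of (R_r, R_r†) equals g(r)
      (1 / 2) * (((((1 + r) / 2) * f (((1 - r) / 2) / ((1 + r) / 2)) +
            ((1 - r) / 2) * f (((1 + r) / 2) / ((1 - r) / 2)))) +
          ((((1 - r) / 2) * f (((1 + r) / 2) / ((1 - r) / 2)) +
            ((1 + r) / 2) * f (((1 - r) / 2) / ((1 + r) / 2))))) = gbin f r := by
  set a := mP - mQ with ha
  set s := Real.sqrt (4 * σ ^ 2 + a ^ 2) with hs
  have hpos : (0:ℝ) < 4 * σ ^ 2 + a ^ 2 := by positivity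
  have hspos : 0 < s := Real.sqrt_pos.mpr hpos
  have hs2 : s ^ 2 = 4 * σ ^ 2 + a ^ 2 := Real.sq_sqrt hpos.le
  set c : ℝ := (if 0 ≤ a then 1 else -1) * s / 2 with hc
  set r : ℝ := |a| / s with hr
  have hrc : r * c = a / 2 := by
    rw [hr, hc]
    rcases le_or_gt 0 a with h | h
    · rw [if_pos h, abs_of_nonneg h]; field_simp
    · rw [if_neg (not_le.mpr h), abs_of_neg h]; field_simp
  have hc2 : c ^ 2 = σ ^ 2 + a ^ 2 / 4 := by
    rw [hc]
    rcases le_or_gt 0 a with h | h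
    · rw [if_pos h]; rw [div_pow]; nlinarith
    · rw [if_neg (not_le.mpr h)]; rw [div_pow]; nlinarith
  have hr0 : 0 ≤ r := div_nonneg (abs_nonneg a) hspos.le
  have hr1 : r < 1 := by
    rw [hr, div_lt_one hspos]
    have : a ^ 2 < s ^ 2 := by nlinarith
    nlinarith [abs_nonneg a, sq_abs a]
  clear_value c r
  clear_value s
  clear_value a
  subst ha
  refine ⟨(mP + mQ) / 2 - c, (mP + mQ) / 2 + c, ?_, ?_, ?_, ?_, ?_⟩
  · rw [← hs, ← hr]; linear_combination hrc
  · rw [← hs, ← hr]; linear_combination hc2 - (mP - mQ) * hrc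
  · rw [← hs, ← hr]; linear_combination -hrc
  · rw [← hs, ← hr]; linear_combination hc2 - (mP - mQ) * hrc
  · rw [← hs, ← hr]
    have h1p : (0:ℝ) < 1 + r := by linarith
    have h1m : (0:ℝ) < 1 - r := by linarith
    have e1 : ((1 - r) / 2) / ((1 + r) / 2) = (1 - r) / (1 + r) := by
      field_simp
    have e2 : ((1 + r) / 2) / ((1 - r) / 2) = (1 + r) / (1 - r) := by
      field_simp
    rw [e1, e2, gbin]
    ring
end

section
/- For any probability measures P, Q with densities p, q with respect to a dominating measure μ, H²(P,Q) ≥ 1 - √(1 - Δ(P,Q)) = Δ(P,Q)/(1 + √(1 - Δ(P,Q))), where H²(P,Q) = (1/2)∫(√p - √q)² dμ is the squared Hellinger distance and Δ(P,Q) = (1/2)∫(p-q)²/(p+q) dμ is the triangular discrimination. -/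
open Real MeasureTheory

theorem hellinger_ge_triangular_bound {X : Type*} [MeasurableSpace X] (μ : Measure X)
    (p q : X → ℝ) (hpm : Measurable p) (hqm : Measurable q)
    (hp : ∀ x, 0 < p x) (hq : ∀ x, 0 < q x)
    (hp1 : ∫ x, p x ∂μ = 1) (hq1 : ∫ x, q x ∂μ = 1)
    (hIH : Integrable (fun x => (Real.sqrt (p x) - Real.sqrt (q x)) ^ 2) μ)
    (hIΔ : Integrable (fun x => (p x - q x) ^ 2 / (p x + q x)) μ) :
    ((1 / 2) * ∫ x, (Real.sqrt (p x) - Real.sqrt (q x)) ^ 2 ∂μ ≥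
      1 - Real.sqrt (1 - (1 / 2) * ∫ x, (p x - q x) ^ 2 / (p x + q x) ∂μ)) ∧
    (1 - Real.sqrt (1 - (1 / 2) * ∫ x, (p x - q x) ^ 2 / (p x + q x) ∂μ) =
      ((1 / 2) * ∫ x, (p x - q x) ^ 2 / (p x + q x) ∂μ) /
        (1 + Real.sqrt (1 - (1 / 2) * ∫ x, (p x - q x) ^ 2 / (p x + q x) ∂μ))) := by
  have hpq0 : ∀ x, 0 < p x + q x := fun x => add_pos (hp x) (hq x)
  -- integrability of p and q
  have hpint : Integrable p μ := by
    by_contra h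
    rw [integral_undef h] at hp1; norm_num at hp1
  have hqint : Integrable q μ := by
    by_contra h
    rw [integral_undef h] at hq1; norm_num at hq1
  -- f = sqrt(p q), g = p q / (p+q)
  set f : X → ℝ := fun x => Real.sqrt (p x * q x) with hf
  set g : X → ℝ := fun x => p x * q x / (p x + q x) with hg
  have hfm : Measurable f := (hpm.mul hqm).sqrt
  have hgm : Measurable g := (hpm.mul hqm).div (hpm.add hqm)
  have hg_nonneg : ∀ x, 0 ≤ g x := fun x =>
    div_nonneg (mul_nonneg (hp x).le (hq x).le) (hpq0 x).le
  have hf_nonneg : ∀ x, 0 ≤ f x := fun x => Real.sqrt_nonneg _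
  have hpqint : Integrable (fun x => p x + q x) μ := hpint.add hqint
  have hfint : Integrable f μ := by
    refine Integrable.mono' (hpqint.div_const 2) hfm.aestronglyMeasurable
      (Filter.Eventually.of_forall fun x => ?_)
    rw [Real.norm_of_nonneg (hf_nonneg x)]
    show f x ≤ (p x + q x) / 2
    have h1 : f x ^ 2 ≤ ((p x + q x) / 2) ^ 2 := by
      rw [hf]
      simp only
      rw [Real.sq_sqrt (mul_nonneg (hp x).le (hq x).le)]
      nlinarith [sq_nonneg (p x - q x), (hp x), (hq x)]
    have h2 : 0 ≤ (p x + q x) / 2 := by linarith [hpq0 x]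
    nlinarith [hf_nonneg x]
  have hgint : Integrable g μ := by
    refine Integrable.mono' hpint hgm.aestronglyMeasurable
      (Filter.Eventually.of_forall fun x => ?_)
    rw [Real.norm_of_nonneg (hg_nonneg x)]
    rw [hg]; simp only
    rw [div_le_iff₀ (hpq0 x)]
    nlinarith [(hp x), (hq x)]
  have hpqI : ∫ x, p x + q x ∂μ = 2 := by
    rw [integral_add hpint hqint, hp1, hq1]; norm_num
  set ρ : ℝ := ∫ x, f x ∂μ with hρ
  set σ : ℝ := ∫ x, g x ∂μ with hσ
  have hρ0 : 0 ≤ ρ := integral_nonneg hf_nonneg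
  have hσ0 : 0 ≤ σ := integral_nonneg hg_nonneg
  -- integral identities
  have hHeq : ∫ x, (Real.sqrt (p x) - Real.sqrt (q x)) ^ 2 ∂μ = 2 - 2 * ρ := by
    have hcongr : ∀ x, (Real.sqrt (p x) - Real.sqrt (q x)) ^ 2 = p x + q x - 2 * f x := by
      intro x
      have : f x = Real.sqrt (p x) * Real.sqrt (q x) := by
        rw [hf]; simp only; rw [Real.sqrt_mul (hp x).le]
      rw [this, sub_sq, Real.sq_sqrt (hp x).le, Real.sq_sqrt (hq x).le]
      ring
    rw [show (fun x => (Real.sqrt (p x) - Real.sqrt (q x)) ^ 2) = fun x => p x + q x - 2 * f x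
        from funext hcongr] at hIH ⊢
    rw [integral_sub hpqint (hfint.const_mul 2), hpqI, MeasureTheory.integral_const_mul, hρ]
  have hΔeq : ∫ x, (p x - q x) ^ 2 / (p x + q x) ∂μ = 2 - 4 * σ := by
    have hcongr : ∀ x, (p x - q x) ^ 2 / (p x + q x) = p x + q x - 4 * g x := by
      intro x
      have h0 := (hpq0 x).ne'
      rw [hg]; simp only
      field_simp
      ring
    rw [show (fun x => (p x - q x) ^ 2 / (p x + q x)) = fun x => p x + q x - 4 * g x
        from funext hcongr] at hIΔ ⊢
    rw [integral_sub hpqint (hgint.const_mul 4), hpqI, MeasureTheory.integral_const_mul, hσ]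
  -- Cauchy-Schwarz: ρ ≤ sqrt σ * sqrt 2
  have hCS : ρ ^ 2 ≤ 2 * σ := by
    have hconj : Real.HolderConjugate 2 2 := Real.HolderConjugate.two_two
    have hsg : MemLp (fun x => Real.sqrt (g x)) (ENNReal.ofReal 2) μ := by
      rw [show ENNReal.ofReal 2 = 2 by norm_num]
      rw [memLp_two_iff_integrable_sq (hgm.sqrt.aestronglyMeasurable)]
      refine hgint.congr (Filter.Eventually.of_forall fun x => ?_)
      simp [Real.sq_sqrt (hg_nonneg x)]
    have hspq : MemLp (fun x => Real.sqrt (p x + q x)) (ENNReal.ofReal 2) μ := by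
      rw [show ENNReal.ofReal 2 = 2 by norm_num]
      rw [memLp_two_iff_integrable_sq (f := fun x => Real.sqrt (p x + q x)) ((hpm.add hqm).sqrt.aestronglyMeasurable)]
      refine hpqint.congr (Filter.Eventually.of_forall fun x => ?_)
      simp [Real.sq_sqrt (hpq0 x).le]
    have key := MeasureTheory.integral_mul_le_Lp_mul_Lq_of_nonneg hconj
      (Filter.Eventually.of_forall fun x => Real.sqrt_nonneg (g x))
      (Filter.Eventually.of_forall fun x => Real.sqrt_nonneg (p x + q x)) hsg hspq
    have hL : ∫ x, Real.sqrt (g x) * Real.sqrt (p x + q x) ∂μ = ρ := by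
      rw [hρ]
      refine integral_congr_ae (Filter.Eventually.of_forall fun x => ?_)
      simp only
      rw [← Real.sqrt_mul (hg_nonneg x), hg]
      simp only
      rw [div_mul_cancel₀ _ (hpq0 x).ne']
    have hR1 : ∫ x, Real.sqrt (g x) ^ (2:ℝ) ∂μ = σ := by
      rw [hσ]
      refine integral_congr_ae (Filter.Eventually.of_forall fun x => ?_)
      simp only
      rw [Real.rpow_two, Real.sq_sqrt (hg_nonneg x)]
    have hR2 : ∫ x, Real.sqrt (p x + q x) ^ (2:ℝ) ∂μ = 2 := by
      have : ∫ x, Real.sqrt (p x + q x) ^ (2:ℝ) ∂μ = ∫ x, p x + q x ∂μ := by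
        refine integral_congr_ae (Filter.Eventually.of_forall fun x => ?_)
        simp only
        rw [Real.rpow_two, Real.sq_sqrt (hpq0 x).le]
      rw [this, hpqI]
    rw [hL, hR1, hR2] at key
    have hρle : ρ ≤ σ ^ ((1:ℝ)/2) * 2 ^ ((1:ℝ)/2) := key
    have hsqr : ∀ a : ℝ, 0 ≤ a → (a ^ ((1:ℝ)/2)) ^ 2 = a := by
      intro a ha
      rw [← Real.rpow_natCast (a ^ ((1:ℝ)/2)) 2, ← Real.rpow_mul ha]
      norm_num
    have h2 : (σ ^ ((1:ℝ)/2) * 2 ^ ((1:ℝ)/2)) ^ 2 = 2 * σ := by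
      rw [mul_pow, hsqr σ hσ0, hsqr 2 (by norm_num)]
      ring
    calc ρ ^ 2 ≤ (σ ^ ((1:ℝ)/2) * 2 ^ ((1:ℝ)/2)) ^ 2 := by
          apply pow_le_pow_left₀ hρ0 hρle
      _ = 2 * σ := h2
  have h1Δ : 1 - (1 / 2) * ∫ x, (p x - q x) ^ 2 / (p x + q x) ∂μ = 2 * σ := by
    rw [hΔeq]; ring
  have hsq : Real.sqrt (2 * σ) ≥ ρ := by
    calc Real.sqrt (2 * σ) ≥ Real.sqrt (ρ ^ 2) := Real.sqrt_le_sqrt hCS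
      _ = ρ := Real.sqrt_sq hρ0
  constructor
  · rw [hHeq, h1Δ]
    have : (1:ℝ) / 2 * (2 - 2 * ρ) = 1 - ρ := by ring
    rw [this]
    linarith
  · rw [h1Δ, hΔeq]
    have hs0 : 0 ≤ Real.sqrt (2 * σ) := Real.sqrt_nonneg _
    have hss : Real.sqrt (2 * σ) ^ 2 = 2 * σ := Real.sq_sqrt (by linarith)
    have hpos : 0 < 1 + Real.sqrt (2 * σ) := by linarith
    rw [eq_div_iff hpos.ne']
    nlinarith [hss]
end

section
/- For any probability measures P, Q, Δ(P,Q) + Z(P,Q)² ≤ 1, where Δ is the triangular discrimination and Z(P,Q) = ∫ √(pq) dμ is the Bhattacharyya coefficient. -/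
open Real MeasureTheory

theorem triangular_add_bhattacharyya_sq_le_one {X : Type*} [MeasurableSpace X] (μ : Measure X)
    (p q : X → ℝ) (hpm : Measurable p) (hqm : Measurable q)
    (hp : ∀ x, 0 < p x) (hq : ∀ x, 0 < q x)
    (hp1 : ∫ x, p x ∂μ = 1) (hq1 : ∫ x, q x ∂μ = 1)
    (hIZ : Integrable (fun x => Real.sqrt (p x * q x)) μ)
    (hIΔ : Integrable (fun x => (p x - q x) ^ 2 / (p x + q x)) μ) :
    (1 / 2) * (∫ x, (p x - q x) ^ 2 / (p x + q x) ∂μ) +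
      (∫ x, Real.sqrt (p x * q x) ∂μ) ^ 2 ≤ 1 := by
  have hip : Integrable p μ := integrable_of_integral_eq_one hp1
  have hiq : Integrable q μ := integrable_of_integral_eq_one hq1
  have hpq_pos : ∀ x, 0 < p x + q x := fun x => add_pos (hp x) (hq x)
  -- g = pq/(p+q)
  set g : X → ℝ := fun x => p x * q x / (p x + q x) with hg_def
  have hg_meas : Measurable g := (hpm.mul hqm).div (hpm.add hqm)
  have hg_nonneg : ∀ x, 0 ≤ g x := fun x =>
    div_nonneg (mul_nonneg (hp x).le (hq x).le) (hpq_pos x).le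
  -- g ≤ √(pq)/2 since 2√(pq) ≤ p+q
  have hg_le : ∀ x, g x ≤ Real.sqrt (p x * q x) / 2 := by
    intro x
    have hs : Real.sqrt (p x * q x) ^ 2 = p x * q x :=
      Real.sq_sqrt (mul_nonneg (hp x).le (hq x).le)
    have h2 : 2 * Real.sqrt (p x * q x) ≤ p x + q x := by
      nlinarith [Real.sqrt_nonneg (p x * q x), sq_nonneg (Real.sqrt (p x) - Real.sqrt (q x)),
        Real.sq_sqrt (hp x).le, Real.sq_sqrt (hq x).le,
        Real.sqrt_mul_self (hp x).le,
        Real.sqrt_mul (hp x).le (q x)]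
    rw [div_le_div_iff₀ (hpq_pos x) two_pos]
    nlinarith [Real.sqrt_nonneg (p x * q x), hs]
  have hig : Integrable g μ := by
    refine Integrable.mono' (hIZ.div_const 2) hg_meas.aestronglyMeasurable ?_
    filter_upwards with x
    rw [Real.norm_of_nonneg (hg_nonneg x)]
    exact hg_le x
  -- key identity for the triangular term
  have hΔ : ∀ x, (p x - q x) ^ 2 / (p x + q x) = (p x + q x) - 4 * g x := by
    intro x
    have h := (hpq_pos x).ne'
    simp only [hg_def]
    field_simp [hg_def]
    ring
  have hΔint : (∫ x, (p x - q x) ^ 2 / (p x + q x) ∂μ) = 2 - 4 * ∫ x, g x ∂μ := by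
    calc (∫ x, (p x - q x) ^ 2 / (p x + q x) ∂μ)
        = ∫ x, ((p x + q x) - 4 * g x) ∂μ := by
          exact integral_congr_ae (Filter.Eventually.of_forall hΔ)
      _ = (∫ x, (p x + q x) ∂μ) - ∫ x, 4 * g x ∂μ :=
          integral_sub (hip.add hiq) (hig.const_mul 4)
      _ = 2 - 4 * ∫ x, g x ∂μ := by
          rw [integral_add hip hiq, hp1, hq1, integral_const_mul]; norm_num
  -- Cauchy–Schwarz: Z² ≤ 2 ∫ g
  set f1 : X → ℝ := fun x => Real.sqrt (2 * g x) with hf1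
  set f2 : X → ℝ := fun x => Real.sqrt ((p x + q x) / 2) with hf2
  have hf1sq : ∀ x, f1 x ^ 2 = 2 * g x := fun x =>
    Real.sq_sqrt (mul_nonneg two_pos.le (hg_nonneg x))
  have hf2sq : ∀ x, f2 x ^ 2 = (p x + q x) / 2 := fun x =>
    Real.sq_sqrt (div_nonneg (hpq_pos x).le two_pos.le)
  have hmul : ∀ x, f1 x * f2 x = Real.sqrt (p x * q x) := by
    intro x
    rw [hf1, hf2, ← Real.sqrt_mul (mul_nonneg two_pos.le (hg_nonneg x))]
    congr 1
    have h1 : (2 * g x) * ((p x + q x) / 2) = g x * (p x + q x) := by ring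
    rw [h1, hg_def]
    exact div_mul_cancel₀ _ (hpq_pos x).ne'
  have hm1 : MemLp f1 (ENNReal.ofReal (2:ℝ)) μ := by
    rw [show ENNReal.ofReal (2:ℝ) = 2 by norm_num]
    refine (memLp_two_iff_integrable_sq
      ((hg_meas.const_mul 2).sqrt.aestronglyMeasurable)).mpr ?_
    have : Integrable (fun x => 2 * g x) μ := hig.const_mul 2
    exact this.congr (Filter.Eventually.of_forall fun x => (hf1sq x).symm)
  have hm2 : MemLp f2 (ENNReal.ofReal (2:ℝ)) μ := by
    rw [show ENNReal.ofReal (2:ℝ) = 2 by norm_num]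
    refine (memLp_two_iff_integrable_sq
      (((hpm.add hqm).div_const 2).sqrt.aestronglyMeasurable)).mpr ?_
    have : Integrable (fun x => (p x + q x) / 2) μ := (hip.add hiq).div_const 2
    exact this.congr (Filter.Eventually.of_forall fun x => (hf2sq x).symm)
  have hconj : Real.HolderConjugate 2 2 := Real.HolderConjugate.two_two
  have hCS := integral_mul_le_Lp_mul_Lq_of_nonneg hconj
    (Filter.Eventually.of_forall fun x => Real.sqrt_nonneg _)
    (Filter.Eventually.of_forall fun x => Real.sqrt_nonneg _)
    hm1 hm2
  rw [show (∫ a, f1 a * f2 a ∂μ) = ∫ x, Real.sqrt (p x * q x) ∂μ from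
      integral_congr_ae (Filter.Eventually.of_forall hmul)] at hCS
  have hI2 : (∫ a, f2 a ^ (2:ℝ) ∂μ) = 1 := by
    have : (∫ a, f2 a ^ (2:ℝ) ∂μ) = ∫ x, (p x + q x) / 2 ∂μ := by
      refine integral_congr_ae (Filter.Eventually.of_forall fun x => ?_)
      show f2 x ^ (2:ℝ) = (p x + q x) / 2
      rw [show f2 x ^ (2:ℝ) = f2 x ^ (2:ℕ) by
        rw [← Real.rpow_natCast (f2 x) 2]; norm_num, hf2sq x]
    rw [this, integral_div, integral_add hip hiq, hp1, hq1]; norm_num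
  have hI1 : (∫ a, f1 a ^ (2:ℝ) ∂μ) = 2 * ∫ x, g x ∂μ := by
    have : (∫ a, f1 a ^ (2:ℝ) ∂μ) = ∫ x, 2 * g x ∂μ := by
      refine integral_congr_ae (Filter.Eventually.of_forall fun x => ?_)
      show f1 x ^ (2:ℝ) = 2 * g x
      rw [show f1 x ^ (2:ℝ) = f1 x ^ (2:ℕ) by
        rw [← Real.rpow_natCast (f1 x) 2]; norm_num, hf1sq x]
    rw [this, integral_const_mul]
  rw [hI1, hI2] at hCS
  have hZ_nonneg : 0 ≤ ∫ x, Real.sqrt (p x * q x) ∂μ :=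
    integral_nonneg fun x => Real.sqrt_nonneg _
  have hg_int_nonneg : 0 ≤ ∫ x, g x ∂μ := integral_nonneg hg_nonneg
  have hZ2 : (∫ x, Real.sqrt (p x * q x) ∂μ) ^ 2 ≤ 2 * ∫ x, g x ∂μ := by
    have h : (∫ x, Real.sqrt (p x * q x) ∂μ) ≤ (2 * ∫ x, g x ∂μ) ^ ((1:ℝ)/2) := by
      calc (∫ x, Real.sqrt (p x * q x) ∂μ)
          ≤ (2 * ∫ x, g x ∂μ) ^ ((1:ℝ)/2) * (1:ℝ) ^ ((1:ℝ)/2) := hCS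
        _ = (2 * ∫ x, g x ∂μ) ^ ((1:ℝ)/2) := by rw [Real.one_rpow, mul_one]
    have h2 : (∫ x, Real.sqrt (p x * q x) ∂μ) ^ 2 ≤ ((2 * ∫ x, g x ∂μ) ^ ((1:ℝ)/2)) ^ 2 := by
      exact pow_le_pow_left₀ hZ_nonneg h 2
    calc (∫ x, Real.sqrt (p x * q x) ∂μ) ^ 2
        ≤ ((2 * ∫ x, g x ∂μ) ^ ((1:ℝ)/2)) ^ 2 := h2
      _ = 2 * ∫ x, g x ∂μ := by
          rw [← Real.rpow_natCast ((2 * ∫ x, g x ∂μ) ^ ((1:ℝ)/2)) 2,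
            ← Real.rpow_mul (by positivity)]
          norm_num
  rw [hΔint]
  linarith
end

section
/- For probability measures P, Q on ℝ with means m_P, m_Q, variances σ_P², σ_Q², and a = m_P - m_Q, the triangular discrimination satisfies Δ(P,Q) ≥ a²/(2(σ_P² + σ_Q²) + a²). -/
open Real MeasureTheory

lemma my_integrable_of_integral_one {μ : Measure ℝ} {p : ℝ → ℝ}
    (hp1 : ∫ x, p x ∂μ = 1) : Integrable p μ := by
  by_contra h
  rw [integral_undef h] at hp1
  norm_num at hp1

lemma my_shift_moment {μ : Measure ℝ} {p : ℝ → ℝ} {m v : ℝ} (c : ℝ)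
    (hIp : Integrable p μ) (hIx : Integrable (fun x => x * p x) μ)
    (hIv : Integrable (fun x => (x - m) ^ 2 * p x) μ)
    (hp1 : ∫ x, p x ∂μ = 1) (hm : ∫ x, x * p x ∂μ = m)
    (hv : ∫ x, (x - m) ^ 2 * p x ∂μ = v) :
    Integrable (fun x => (x - c) ^ 2 * p x) μ ∧
      ∫ x, (x - c) ^ 2 * p x ∂μ = v + (m - c) ^ 2 := by
  have hfun : (fun x => (x - c) ^ 2 * p x) =
      fun x => (x - m) ^ 2 * p x + (2 * (m - c)) * (x * p x) +
        (-(m - c) * (m + c)) * p x := by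
    funext x; ring
  have hI1 : Integrable (fun x => (2 * (m - c)) * (x * p x)) μ := hIx.const_mul _
  have hI2 : Integrable (fun x => (x - m) ^ 2 * p x + (2 * (m - c)) * (x * p x)) μ :=
    hIv.add hI1
  have hI3 : Integrable (fun x => (-(m - c) * (m + c)) * p x) μ := hIp.const_mul _
  constructor
  · rw [hfun]; exact hI2.add hI3
  · rw [hfun, integral_add hI2 hI3, integral_add hIv hI1, integral_const_mul,
      integral_const_mul, hv, hm, hp1]
    ring

theorem triangular_ge_means_variances_bound
    (μ : Measure ℝ)
    (p q : ℝ → ℝ) (hpm : Measurable p) (hqm : Measurable q)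
    (hp : ∀ x, 0 < p x) (hq : ∀ x, 0 < q x)
    (hp1 : ∫ x, p x ∂μ = 1) (hq1 : ∫ x, q x ∂μ = 1)
    (mP mQ σP σQ : ℝ)
    (hmPi : Integrable (fun x => x * p x) μ) (hmQi : Integrable (fun x => x * q x) μ)
    (hvPi : Integrable (fun x => (x - mP) ^ 2 * p x) μ)
    (hvQi : Integrable (fun x => (x - mQ) ^ 2 * q x) μ)
    (hmP : ∫ x, x * p x ∂μ = mP) (hmQ : ∫ x, x * q x ∂μ = mQ)
    (hvP : ∫ x, (x - mP) ^ 2 * p x ∂μ = σP ^ 2)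
    (hvQ : ∫ x, (x - mQ) ^ 2 * q x ∂μ = σQ ^ 2)
    (hIΔ : Integrable (fun x => (p x - q x) ^ 2 / (p x + q x)) μ) :
    (1 / 2) * ∫ x, (p x - q x) ^ 2 / (p x + q x) ∂μ ≥
      (mP - mQ) ^ 2 / (2 * (σP ^ 2 + σQ ^ 2) + (mP - mQ) ^ 2) := by
  have hIp : Integrable p μ := my_integrable_of_integral_one hp1
  have hIq : Integrable q μ := my_integrable_of_integral_one hq1
  have hσP : 0 ≤ σP ^ 2 := by
    rw [← hvP]; exact integral_nonneg fun x => mul_nonneg (sq_nonneg _) (hp x).le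
  have hσQ : 0 ≤ σQ ^ 2 := by
    rw [← hvQ]; exact integral_nonneg fun x => mul_nonneg (sq_nonneg _) (hq x).le
  set a := mP - mQ with ha_def
  set c := (mP + mQ) / 2 with hc_def
  set D := ∫ x, (p x - q x) ^ 2 / (p x + q x) ∂μ with hD_def
  have hDnn : 0 ≤ D := by
    apply integral_nonneg
    intro x
    exact div_nonneg (sq_nonneg _) (by nlinarith [hp x, hq x])
  rcases eq_or_ne a 0 with ha | ha
  · rw [ha]
    simp only [ne_eq, OfNat.ofNat_ne_zero, not_false_eq_true, zero_pow, zero_div]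
    linarith
  -- a ≠ 0 case
  obtain ⟨hI2P, hE2P⟩ := my_shift_moment c hIp hmPi hvPi hp1 hmP hvP
  obtain ⟨hI2Q, hE2Q⟩ := my_shift_moment c hIq hmQi hvQi hq1 hmQ hvQ
  have hcP : (mP - c) ^ 2 = a ^ 2 / 4 := by rw [hc_def, ha_def]; ring
  have hcQ : (mQ - c) ^ 2 = a ^ 2 / 4 := by rw [hc_def, ha_def]; ring
  have ha2 : 0 < a ^ 2 := lt_of_le_of_ne (sq_nonneg a) (Ne.symm (pow_ne_zero 2 ha))
  set S := σP ^ 2 + σQ ^ 2 + a ^ 2 / 2 with hS_def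
  set t := a / S with ht_def
  clear_value t S D c a
  have hS : 0 < S := by rw [hS_def]; nlinarith [hσP, hσQ, ha2]
  -- first moment of the difference
  have hfun1 : (fun x => (x - c) * (p x - q x)) =
      fun x => x * p x - x * q x - c * p x + c * q x := by funext x; ring
  have hJ1 : Integrable (fun x => x * p x - x * q x) μ := hmPi.sub hmQi
  have hJcp : Integrable (fun x => c * p x) μ := hIp.const_mul c
  have hJcq : Integrable (fun x => c * q x) μ := hIq.const_mul c
  have hJ2 : Integrable (fun x => x * p x - x * q x - c * p x) μ := hJ1.sub hJcp
  have hI1 : Integrable (fun x => (x - c) * (p x - q x)) μ := by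
    rw [hfun1]; exact hJ2.add hJcq
  have hE1 : ∫ x, (x - c) * (p x - q x) ∂μ = a := by
    rw [hfun1, integral_add hJ2 hJcq, integral_sub hJ1 hJcp, integral_sub hmPi hmQi,
      integral_const_mul, integral_const_mul, hmP, hmQ, hp1, hq1, ha_def]
    ring
  -- the quadratic expression
  have hInt2 : Integrable (fun x => (x - c) ^ 2 * p x + (x - c) ^ 2 * q x) μ :=
    hI2P.add hI2Q
  have hK0 : Integrable (fun x => (2 * t) * ((x - c) * (p x - q x))) μ :=
    hI1.const_mul _
  have hK1 : Integrable (fun x =>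
      (p x - q x) ^ 2 / (p x + q x) - (2 * t) * ((x - c) * (p x - q x))) μ :=
    hIΔ.sub hK0
  have hK2 : Integrable (fun x =>
      t ^ 2 * ((x - c) ^ 2 * p x + (x - c) ^ 2 * q x)) μ := hInt2.const_mul _
  have hnonneg : ∀ x, 0 ≤
      (p x - q x) ^ 2 / (p x + q x) - (2 * t) * ((x - c) * (p x - q x)) +
        t ^ 2 * ((x - c) ^ 2 * p x + (x - c) ^ 2 * q x) := by
    intro x
    have hs : 0 < p x + q x := by nlinarith [hp x, hq x]
    have heq : (p x - q x) ^ 2 / (p x + q x) - (2 * t) * ((x - c) * (p x - q x)) +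
        t ^ 2 * ((x - c) ^ 2 * p x + (x - c) ^ 2 * q x) =
        ((p x - q x) - t * (x - c) * (p x + q x)) ^ 2 / (p x + q x) := by
      field_simp
      ring
    rw [heq]
    exact div_nonneg (sq_nonneg _) hs.le
  have hkey : 0 ≤ D - 2 * t * a + t ^ 2 * S := by
    have h0 : 0 ≤ ∫ x,
        ((p x - q x) ^ 2 / (p x + q x) - (2 * t) * ((x - c) * (p x - q x)) +
          t ^ 2 * ((x - c) ^ 2 * p x + (x - c) ^ 2 * q x)) ∂μ :=
      integral_nonneg hnonneg
    rw [integral_add hK1 hK2, integral_sub hIΔ hK0, integral_const_mul,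
      integral_const_mul, integral_add hI2P hI2Q, hE2P, hE2Q, hE1, hcP, hcQ] at h0
    have hSS : σP ^ 2 + a ^ 2 / 4 + (σQ ^ 2 + a ^ 2 / 4) = S := by
      rw [hS_def]; ring
    rw [hSS] at h0
    rw [← hD_def] at h0
    linarith
  have e1 : 2 * t * a = 2 * (a ^ 2 / S) := by rw [ht_def]; ring
  have e2 : t ^ 2 * S = a ^ 2 / S := by
    rw [ht_def]; field_simp
  have h3 : a ^ 2 / S ≤ D := by rw [e1, e2] at hkey; linarith
  have h4 : a ^ 2 ≤ D * S := (div_le_iff₀ hS).mp h3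
  rw [hS_def] at h4
  have h2S : 0 < 2 * (σP ^ 2 + σQ ^ 2) + a ^ 2 :=
    add_pos_of_nonneg_of_pos (by linarith) ha2
  rw [ge_iff_le, div_le_iff₀ h2S]
  exact h4.trans_eq (by ring)
end

section
/- Let P = (p, 1-p) and Q = (q, 1-q) be two-element probability measures on points {x₁ + (m_P+m_Q)/2, x₂ + (m_P+m_Q)/2} with means m_P, m_Q and variances σ_P², σ_Q² respectively, and a = m_P - m_Q ≠ 0. Then Δ(P,Q) = a²/(2(σ_P² + σ_Q²) + a²), i.e., the lower bound on the triangular discrimination under given means and variances is attained by two-element measures. -/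
open Real Set

theorem two_element_triangular_attains_bound
    (p q x₁ x₂ mP mQ σP σQ : ℝ)
    (hp : p ∈ Ioo (0:ℝ) 1) (hq : q ∈ Ioo (0:ℝ) 1)
    (ha : mP - mQ ≠ 0)
    -- means of P = (p, 1-p) and Q = (q, 1-q) on {x₁ + (mP+mQ)/2, x₂ + (mP+mQ)/2}
    (hmP : p * (x₁ + (mP + mQ) / 2) + (1 - p) * (x₂ + (mP + mQ) / 2) = mP)
    (hmQ : q * (x₁ + (mP + mQ) / 2) + (1 - q) * (x₂ + (mP + mQ) / 2) = mQ)
    -- variances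
    (hvP : p * (x₁ + (mP + mQ) / 2 - mP) ^ 2 + (1 - p) * (x₂ + (mP + mQ) / 2 - mP) ^ 2 = σP ^ 2)
    (hvQ : q * (x₁ + (mP + mQ) / 2 - mQ) ^ 2 + (1 - q) * (x₂ + (mP + mQ) / 2 - mQ) ^ 2 = σQ ^ 2) :
    (p - q) ^ 2 / (2 * (p + q)) + ((1 - p) - (1 - q)) ^ 2 / (2 * ((1 - p) + (1 - q))) =
      (mP - mQ) ^ 2 / (2 * (σP ^ 2 + σQ ^ 2) + (mP - mQ) ^ 2) := by
  obtain ⟨hp0, hp1⟩ := hp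
  obtain ⟨hq0, hq1⟩ := hq
  have e1 : p * x₁ + (1 - p) * x₂ = (mP - mQ) / 2 := by linear_combination hmP
  have e2 : q * x₁ + (1 - q) * x₂ = -((mP - mQ) / 2) := by linear_combination hmQ
  have e3 : p * x₁ ^ 2 + (1 - p) * x₂ ^ 2 = σP ^ 2 + (mP - mQ) ^ 2 / 4 := by
    linear_combination hvP + (mP - mQ) * e1
  have e4 : q * x₁ ^ 2 + (1 - q) * x₂ ^ 2 = σQ ^ 2 + (mP - mQ) ^ 2 / 4 := by
    linear_combination hvQ - (mP - mQ) * e2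
  have h0 : (p + q) * x₁ + (2 - p - q) * x₂ = 0 := by linear_combination e1 + e2
  have haeq : mP - mQ = (p - q) * (x₁ - x₂) := by linear_combination e2 - e1
  have hv : (0:ℝ) < 2 - p - q := by linarith
  have hu : (0:ℝ) < p + q := by linarith
  have hx1 : x₁ ≠ 0 := by
    intro h
    apply ha
    have hx2 : x₂ = 0 := by
      have := h0
      rw [h] at this
      have : (2 - p - q) * x₂ = 0 := by linarith
      rcases mul_eq_zero.mp this with h' | h'
      · linarith
      · exact h'
    rw [haeq, h, hx2]; ring
  have hS : 2 * (σP ^ 2 + σQ ^ 2) + (mP - mQ) ^ 2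
      = 2 * ((p + q) * x₁ ^ 2 + (2 - p - q) * x₂ ^ 2) := by
    linear_combination -2 * e3 - 2 * e4
  have hD : 2 * (σP ^ 2 + σQ ^ 2) + (mP - mQ) ^ 2 ≠ 0 := by
    rw [hS]
    have h1 : 0 < x₁ ^ 2 := by positivity
    nlinarith [sq_nonneg x₂, mul_pos hu h1, mul_nonneg hv.le (sq_nonneg x₂)]
  have hD' : 2 * ((p + q) * x₁ ^ 2 + (2 - p - q) * x₂ ^ 2) ≠ 0 := hS ▸ hD
  have hDpos : 0 < 2 * ((p + q) * x₁ ^ 2 + (2 - p - q) * x₂ ^ 2) := by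
    have h1 : 0 < x₁ ^ 2 := by positivity
    nlinarith [mul_pos hu h1, mul_nonneg hv.le (sq_nonneg x₂)]
  have key : (p - q) ^ 2 / (2 * (p + q)) + ((1 - p) - (1 - q)) ^ 2 / (2 * ((1 - p) + (1 - q)))
      = (p - q) ^ 2 / ((p + q) * (2 - p - q)) := by
    have n1 : 2 * (p + q) ≠ 0 := ne_of_gt (by linarith)
    have n2 : 2 * ((1 - p) + (1 - q)) ≠ 0 := ne_of_gt (by linarith)
    have n3 : (p + q) * (2 - p - q) ≠ 0 := ne_of_gt (mul_pos hu hv)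
    rw [div_add_div _ _ n1 n2, div_eq_div_iff (mul_ne_zero n1 n2) n3]
    ring
  have n3 : (p + q) * (2 - p - q) ≠ 0 := ne_of_gt (mul_pos hu hv)
  rw [hS, haeq, key, div_eq_div_iff n3 (ne_of_gt hDpos)]
  linear_combination (p - q) ^ 2 * ((p + q) * x₁ + (2 - p - q) * x₂) * h0
end

section
/- For any probability measures P and Q such that D(P‖P†) = D(P†‖P) (symmetric KL, as occurs for P† the jump-reversed measure), D(P‖P†) ≥ g(√Δ(P,P†)) where g(t) = t·ln((1+t)/(1-t)) and Δ is the triangular discrimination. Consequently, in a Markov jump process, the total entropy production Σ_τ = 𝒜_τ·D(P‖P†) and pseudo-entropy production Σ_τ^ps = 2𝒜_τ·Δ(P,P†) satisfy Σ_τ ≥ 𝒜_τ·g(√(Σ_τ^ps/(2𝒜_τ))). -/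
open Real MeasureTheory

/-- Binary Kullback-Leibler divergence (natural log). -/
noncomputable def gKL (t : ℝ) : ℝ := t * Real.log ((1 + t) / (1 - t))

noncomputable def Lf (t : ℝ) : ℝ := Real.log (1 + t) - Real.log (1 - t)

lemma Lf_hasDeriv {t : ℝ} (h1 : -1 < t) (h2 : t < 1) :
    HasDerivAt Lf (2 / (1 - t ^ 2)) t := by
  have h1' : (1 : ℝ) + t ≠ 0 := by linarith
  have h2' : (1 : ℝ) - t ≠ 0 := by linarith
  have d1 : HasDerivAt (fun s : ℝ => Real.log (1 + s)) (1 / (1 + t)) t := by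
    have := (Real.hasDerivAt_log h1').comp t ((hasDerivAt_id t).const_add 1)
    exact this.congr_deriv (by simp [one_div])
  have d2 : HasDerivAt (fun s : ℝ => Real.log (1 - s)) (-(1 / (1 - t))) t := by
    have := (Real.hasDerivAt_log h2').comp t ((hasDerivAt_id t).const_sub 1)
    exact this.congr_deriv (by simp [one_div])
  have h3 : (1 : ℝ) - t ^ 2 ≠ 0 := by
    have : (1 : ℝ) - t ^ 2 = (1 + t) * (1 - t) := by ring
    rw [this]; exact mul_ne_zero h1' h2'
  have := d1.sub d2
  refine this.congr_deriv ?_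
  field_simp
  ring

lemma lemA {t : ℝ} (ht0 : 0 ≤ t) (ht1 : t < 1) :
    Lf t ≤ 2 * t * (1 + t ^ 2) / (1 - t ^ 2) ^ 2 := by
  set G : ℝ → ℝ := fun u => (2 * u + 2 * u ^ 3) / (1 - u ^ 2) ^ 2 - Lf u with hG
  have hder : ∀ u : ℝ, -1 < u → u < 1 →
      HasDerivAt G
        (((2 + 6 * u ^ 2) * (1 - u ^ 2) ^ 2 -
            (2 * u + 2 * u ^ 3) * (2 * (1 - u ^ 2) * (-(2 * u)))) / ((1 - u ^ 2) ^ 2) ^ 2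
          - 2 / (1 - u ^ 2)) u := by
    intro u hu1 hu2
    have hden : (1 : ℝ) - u ^ 2 ≠ 0 := by nlinarith
    have hN : HasDerivAt (fun s : ℝ => 2 * s + 2 * s ^ 3) (2 + 6 * u ^ 2) u := by
      have h1 := (hasDerivAt_id u).const_mul (2 : ℝ)
      have h3 := (hasDerivAt_pow 3 u).const_mul (2 : ℝ)
      have := h1.add h3
      refine this.congr_deriv ?_
      push_cast; ring
    have hDen : HasDerivAt (fun s : ℝ => (1 - s ^ 2) ^ 2) (2 * (1 - u ^ 2) * (-(2 * u))) u := by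
      have hq : HasDerivAt (fun s : ℝ => 1 - s ^ 2) (-(2 * u)) u := by
        have := (hasDerivAt_pow 2 u).const_sub 1
        refine this.congr_deriv ?_
        push_cast; ring
      have := hq.pow 2
      refine this.congr_deriv ?_
      push_cast; ring
    have hR := hN.div hDen (pow_ne_zero 2 hden)
    exact hR.sub (Lf_hasDeriv hu1 hu2)
  have hmono : MonotoneOn G (Set.Ico (0 : ℝ) 1) := by
    apply monotoneOn_of_deriv_nonneg (convex_Ico 0 1)
    · intro x hx
      exact ((hder x (by linarith [hx.1]) hx.2).continuousAt).continuousWithinAt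
    · intro x hx
      rw [interior_Ico] at hx
      exact ((hder x (by linarith [hx.1]) hx.2).differentiableAt).differentiableWithinAt
    · intro x hx
      rw [interior_Ico] at hx
      rw [(hder x (by linarith [hx.1]) hx.2).deriv]
      have hx1 : 0 < x := hx.1
      have hx2 : x < 1 := hx.2
      have hden : (0 : ℝ) < 1 - x ^ 2 := by nlinarith
      rw [sub_nonneg, div_le_div_iff₀ hden (by positivity)]
      nlinarith [sq_nonneg x, sq_nonneg (1 - x ^ 2), mul_pos hx1 hden]
  have h0 : G 0 = 0 := by simp [hG, Lf]
  have := hmono (Set.mem_Ico.2 ⟨le_refl 0, by norm_num⟩) (Set.mem_Ico.2 ⟨ht0, ht1⟩) ht0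
  rw [h0] at this
  have : Lf t ≤ (2 * t + 2 * t ^ 3) / (1 - t ^ 2) ^ 2 := by
    simpa [hG, sub_nonneg] using this
  convert this using 2
  ring



noncomputable def phiF (u : ℝ) : ℝ := Lf u / (2 * u) + (1 - u ^ 2)⁻¹

lemma phiF_hasDeriv {u : ℝ} (h0 : 0 < u) (h1 : u < 1) :
    HasDerivAt phiF
      ((2 / (1 - u ^ 2) * (2 * u) - Lf u * 2) / (2 * u) ^ 2
        - (-(2 * u)) / (1 - u ^ 2) ^ 2) u := by
  have hden : (1 : ℝ) - u ^ 2 ≠ 0 := by nlinarith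
  have hu : (2 : ℝ) * u ≠ 0 := by positivity
  have hq : HasDerivAt (fun s : ℝ => 1 - s ^ 2) (-(2 * u)) u := by
    have := (hasDerivAt_pow 2 u).const_sub 1
    refine this.congr_deriv ?_; push_cast; ring
  have hinv := hq.inv hden
  have hd2 : HasDerivAt (fun s : ℝ => 2 * s) 2 u := by
    simpa using (hasDerivAt_id u).const_mul (2 : ℝ)
  have hdiv := (Lf_hasDeriv (by linarith) h1).div hd2 hu
  have := hdiv.add hinv
  refine this.congr_deriv ?_
  ring

lemma phiF_mono : MonotoneOn phiF (Set.Ioo (0 : ℝ) 1) := by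
  apply monotoneOn_of_deriv_nonneg (convex_Ioo 0 1)
  · intro x hx
    exact ((phiF_hasDeriv hx.1 hx.2).continuousAt).continuousWithinAt
  · intro x hx
    rw [interior_Ioo] at hx
    exact ((phiF_hasDeriv hx.1 hx.2).differentiableAt).differentiableWithinAt
  · intro x hx
    rw [interior_Ioo] at hx
    obtain ⟨hx1, hx2⟩ := hx
    rw [(phiF_hasDeriv hx1 hx2).deriv]
    have hden : (0 : ℝ) < 1 - x ^ 2 := by nlinarith
    have hA := lemA hx1.le hx2
    have key : (2 / (1 - x ^ 2) * (2 * x) - Lf x * 2) / (2 * x) ^ 2 - (-(2 * x)) / (1 - x ^ 2) ^ 2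
        = ((4 * x / (1 - x ^ 2) - 2 * Lf x) * (1 - x ^ 2) ^ 2 + 2 * x * (2 * x) ^ 2)
          / ((2 * x) ^ 2 * (1 - x ^ 2) ^ 2) := by
      field_simp
      ring
    rw [key]
    apply div_nonneg _ (by positivity)
    have h2 : 2 * Lf x * (1 - x ^ 2) ^ 2 ≤ 4 * x * (1 + x ^ 2) := by
      have := mul_le_mul_of_nonneg_right hA (le_of_lt (by positivity : (0:ℝ) < (1 - x ^ 2) ^ 2))
      calc 2 * Lf x * (1 - x ^ 2) ^ 2 ≤ 2 * (2 * x * (1 + x ^ 2) / (1 - x ^ 2) ^ 2) * (1 - x ^ 2) ^ 2 := by nlinarith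
        _ = 4 * x * (1 + x ^ 2) := by field_simp; ring
    have h3 : 4 * x / (1 - x ^ 2) * (1 - x ^ 2) ^ 2 = 4 * x * (1 - x ^ 2) := by
      field_simp
    nlinarith [sq_nonneg x]



lemma gKL_eq_Lf {t : ℝ} (h1 : -1 < t) (h2 : t < 1) : gKL t = t * Lf t := by
  unfold gKL Lf
  rw [Real.log_div (by linarith) (by linarith)]

lemma gKL_nonneg {u : ℝ} (h1 : -1 < u) (h2 : u < 1) : 0 ≤ gKL u := by
  unfold gKL
  rcases le_or_gt 0 u with h | h
  · apply mul_nonneg h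
    apply Real.log_nonneg
    rw [le_div_iff₀ (by linarith)]
    linarith
  · have hlog : Real.log ((1 + u) / (1 - u)) ≤ 0 := by
      apply Real.log_nonpos (div_nonneg (by linarith) (by linarith))
      rw [div_le_one (by linarith)]
      linarith
    nlinarith [mul_nonneg (neg_nonneg.2 h.le) (neg_nonneg.2 hlog)]

lemma gKL_even {u : ℝ} : gKL (-u) = gKL u := by
  unfold gKL
  have h1 : (1 : ℝ) + -u = 1 - u := by ring
  have h2 : (1 : ℝ) - -u = 1 + u := by ring
  rw [h1, h2, show (1 - u) / (1 + u) = ((1 + u) / (1 - u))⁻¹ from (inv_div _ _).symm,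
    Real.log_inv]
  ring

lemma tangent {t : ℝ} (ht0 : 0 ≤ t) (ht1 : t < 1) :
    ∃ c : ℝ, ∀ u : ℝ, -1 < u → u < 1 → gKL t + c * (u ^ 2 - t ^ 2) ≤ gKL u := by
  rcases eq_or_lt_of_le ht0 with h0 | h0
  · refine ⟨0, fun u h1 h2 => ?_⟩
    have : gKL t = 0 := by rw [← h0]; simp [gKL]
    rw [this]
    simpa using gKL_nonneg h1 h2
  · set c := phiF t with hc
    set F : ℝ → ℝ := fun u => u * Lf u - c * u ^ 2 with hF
    have hFd : ∀ u : ℝ, -1 < u → u < 1 →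
        HasDerivAt F (Lf u + u * (2 / (1 - u ^ 2)) - c * (2 * u)) u := by
      intro u h1 h2
      have hm := (hasDerivAt_id u).mul (Lf_hasDeriv h1 h2)
      have hp : HasDerivAt (fun s : ℝ => c * s ^ 2) (c * (2 * u)) u := by
        have := (hasDerivAt_pow 2 u).const_mul c
        refine this.congr_deriv ?_; push_cast; ring
      have := hm.sub hp
      refine this.congr_deriv ?_
      simp
    -- derivative sign via phiF
    have hsign : ∀ u : ℝ, 0 < u → u < 1 →
        Lf u + u * (2 / (1 - u ^ 2)) - c * (2 * u) = 2 * u * (phiF u - c) := by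
      intro u h1 h2
      have hden : (1 : ℝ) - u ^ 2 ≠ 0 := by nlinarith
      unfold phiF
      field_simp
    have hmin : ∀ u : ℝ, 0 ≤ u → u < 1 → F t ≤ F u := by
      intro u hu0 hu1
      rcases le_or_gt u t with hut | hut
      · have hanti : AntitoneOn F (Set.Icc 0 t) := by
          apply antitoneOn_of_deriv_nonpos (convex_Icc 0 t)
          · intro x hx
            exact ((hFd x (by linarith [hx.1]) (by linarith [hx.2])).continuousAt).continuousWithinAt
          · intro x hx
            rw [interior_Icc] at hx
            exact ((hFd x (by linarith [hx.1]) (by linarith [hx.2])).differentiableAt).differentiableWithinAt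
          · intro x hx
            rw [interior_Icc] at hx
            rw [(hFd x (by linarith [hx.1]) (by linarith [hx.2])).deriv,
              hsign x hx.1 (by linarith [hx.2])]
            have : phiF x ≤ c := phiF_mono ⟨hx.1, by linarith [hx.2]⟩ ⟨h0, ht1⟩ hx.2.le
            nlinarith [hx.1]
        exact hanti ⟨hu0, hut⟩ ⟨ht0, le_refl t⟩ hut
      · have hmono : MonotoneOn F (Set.Ico t 1) := by
          apply monotoneOn_of_deriv_nonneg (convex_Ico t 1)
          · intro x hx
            exact ((hFd x (by linarith [hx.1]) hx.2).continuousAt).continuousWithinAt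
          · intro x hx
            rw [interior_Ico] at hx
            exact ((hFd x (by linarith [hx.1]) hx.2).differentiableAt).differentiableWithinAt
          · intro x hx
            rw [interior_Ico] at hx
            rw [(hFd x (by linarith [hx.1]) hx.2).deriv,
              hsign x (by linarith [hx.1]) hx.2]
            have : c ≤ phiF x := phiF_mono ⟨h0, ht1⟩ ⟨by linarith [hx.1], hx.2⟩ hx.1.le
            nlinarith [lt_of_le_of_lt h0.le hx.1]
        exact hmono ⟨le_refl t, ht1⟩ ⟨hut.le, hu1⟩ hut.le
    refine ⟨c, fun u h1 h2 => ?_⟩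
    have habs : |u| < 1 := abs_lt.2 ⟨h1, h2⟩
    have key : F t ≤ F |u| := hmin |u| (abs_nonneg u) habs
    have e1 : gKL u = |u| * Lf |u| := by
      have e2 : gKL |u| = |u| * Lf |u| :=
        gKL_eq_Lf (by linarith [abs_nonneg u]) habs
      rcases abs_choice u with h | h
      · rw [← e2, h]
      · rw [← e2, h, gKL_even]
    have e3 : gKL t = t * Lf t := gKL_eq_Lf (by linarith) ht1
    have e4 : |u| ^ 2 = u ^ 2 := sq_abs u
    simp only [hF, e4] at key
    linarith

lemma pointwise {a b t c : ℝ} (ha : 0 < a) (hb : 0 < b)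
    (htan : ∀ u : ℝ, -1 < u → u < 1 → gKL t + c * (u ^ 2 - t ^ 2) ≤ gKL u) :
    (gKL t - c * t ^ 2) * ((a + b) / 2) + c * ((a - b) ^ 2 / (a + b) / 2)
      ≤ (a * Real.log (a / b) + b * Real.log (b / a)) / 2 := by
  have hab : 0 < a + b := by linarith
  set u := (a - b) / (a + b) with hu
  have h1 : -1 < u := by
    rw [hu, lt_div_iff₀ hab]; linarith
  have h2 : u < 1 := by
    rw [hu, div_lt_iff₀ hab]; linarith
  have key := htan u h1 h2
  have hgu : gKL u = u * Real.log (a / b) := by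
    unfold gKL
    congr 2
    have e1 : 1 + u = 2 * a / (a + b) := by rw [hu]; field_simp; ring
    have e2 : 1 - u = 2 * b / (a + b) := by rw [hu]; field_simp; ring
    rw [e1, e2]
    field_simp
  rw [hgu] at key
  have hmul := mul_le_mul_of_nonneg_right key (by positivity : (0:ℝ) ≤ (a + b) / 2)
  have e3 : u ^ 2 * ((a + b) / 2) = (a - b) ^ 2 / (a + b) / 2 := by
    rw [hu]; field_simp
  have e4 : u * Real.log (a / b) * ((a + b) / 2) = (a - b) * Real.log (a / b) / 2 := by
    rw [hu]; field_simp
  have e5 : Real.log (b / a) = -Real.log (a / b) := by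
    rw [show b / a = (a / b)⁻¹ from (inv_div _ _).symm, Real.log_inv]
  have e6 : (a * Real.log (a / b) + b * Real.log (b / a)) / 2
      = (a - b) * Real.log (a / b) / 2 := by
    rw [e5]; ring
  rw [e6]
  have expand : (gKL t + c * (u ^ 2 - t ^ 2)) * ((a + b) / 2)
      = (gKL t - c * t ^ 2) * ((a + b) / 2) + c * (u ^ 2 * ((a + b) / 2)) := by ring
  rw [expand, e3, e4] at hmul
  linarith

theorem entropy_production_bound {X : Type*} [MeasurableSpace X] (μ : Measure X)
    (p pd : X → ℝ) (hpm : Measurable p) (hpdm : Measurable pd)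
    (hp : ∀ x, 0 < p x) (hpd : ∀ x, 0 < pd x)
    (hp1 : ∫ x, p x ∂μ = 1) (hpd1 : ∫ x, pd x ∂μ = 1)
    (hID : Integrable (fun x => p x * Real.log (p x / pd x)) μ)
    (hIDd : Integrable (fun x => pd x * Real.log (pd x / p x)) μ)
    (hIΔ : Integrable (fun x => (p x - pd x) ^ 2 / (p x + pd x)) μ)
    (hsym : ∫ x, p x * Real.log (p x / pd x) ∂μ = ∫ x, pd x * Real.log (pd x / p x) ∂μ) :
    ((∫ x, p x * Real.log (p x / pd x) ∂μ) ≥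
      gKL (Real.sqrt ((1 / 2) * ∫ x, (p x - pd x) ^ 2 / (p x + pd x) ∂μ))) ∧
    (∀ A St Sps : ℝ, 0 < A →
      St = A * ∫ x, p x * Real.log (p x / pd x) ∂μ →
      Sps = 2 * A * ((1 / 2) * ∫ x, (p x - pd x) ^ 2 / (p x + pd x) ∂μ) →
      St ≥ A * gKL (Real.sqrt (Sps / (2 * A)))) := by
  have hpint : Integrable p μ := by
    by_contra h
    rw [show (∫ x, p x ∂μ) = ∫ x, p x ∂μ from rfl, integral_undef h] at hp1
    norm_num at hp1
  have hpdint : Integrable pd μ := by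
    by_contra h
    rw [integral_undef h] at hpd1
    norm_num at hpd1
  have hμ : μ ≠ 0 := by
    intro h
    rw [h] at hp1
    simp at hp1
  set I := ∫ x, (p x - pd x) ^ 2 / (p x + pd x) ∂μ with hIdef
  have hI0 : 0 ≤ I :=
    integral_nonneg fun x => div_nonneg (sq_nonneg _) (by linarith [hp x, hpd x])
  have hsumint : Integrable (fun x => p x + pd x) μ := hpint.add hpdint
  have hIlt : I < 2 := by
    have hfint : Integrable (fun x => (p x + pd x) - (p x - pd x) ^ 2 / (p x + pd x)) μ :=
      hsumint.sub hIΔ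
    have hpos : ∀ x, 0 < (p x + pd x) - (p x - pd x) ^ 2 / (p x + pd x) := by
      intro x
      have h1 := hp x; have h2 := hpd x
      rw [sub_pos, div_lt_iff₀ (by linarith)]
      nlinarith
    have hsup : Function.support (fun x => (p x + pd x) - (p x - pd x) ^ 2 / (p x + pd x))
        = Set.univ := Set.eq_univ_of_forall fun x => (hpos x).ne'
    have h0 : 0 < ∫ x, ((p x + pd x) - (p x - pd x) ^ 2 / (p x + pd x)) ∂μ := by
      rw [integral_pos_iff_support_of_nonneg (fun x => (hpos x).le) hfint, hsup]
      exact Measure.measure_univ_pos.mpr hμ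
    rw [integral_sub hsumint hIΔ, integral_add hpint hpdint, hp1, hpd1] at h0
    linarith
  set t₀ := Real.sqrt ((1 / 2) * I) with ht₀def
  have hΔ0 : 0 ≤ (1 / 2) * I := by linarith
  have ht0 : 0 ≤ t₀ := Real.sqrt_nonneg _
  have ht2 : t₀ ^ 2 = (1 / 2) * I := Real.sq_sqrt hΔ0
  have ht1 : t₀ < 1 := by nlinarith
  obtain ⟨c, htan⟩ := tangent ht0 ht1
  have hle : ∀ x,
      (gKL t₀ - c * t₀ ^ 2) * ((p x + pd x) / 2) + c * ((p x - pd x) ^ 2 / (p x + pd x) / 2)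
        ≤ (p x * Real.log (p x / pd x) + pd x * Real.log (pd x / p x)) / 2 :=
    fun x => pointwise (hp x) (hpd x) htan
  have hintL1 : Integrable (fun x => (gKL t₀ - c * t₀ ^ 2) * ((p x + pd x) / 2)) μ :=
    (hsumint.div_const 2).const_mul _
  have hintL2 : Integrable (fun x => c * ((p x - pd x) ^ 2 / (p x + pd x) / 2)) μ :=
    (hIΔ.div_const 2).const_mul c
  have hintL : Integrable (fun x =>
      (gKL t₀ - c * t₀ ^ 2) * ((p x + pd x) / 2) + c * ((p x - pd x) ^ 2 / (p x + pd x) / 2)) μ :=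
    hintL1.add hintL2
  have hintR : Integrable (fun x =>
      (p x * Real.log (p x / pd x) + pd x * Real.log (pd x / p x)) / 2) μ :=
    (hID.add hIDd).div_const 2
  have hmono := integral_mono hintL hintR hle
  have eL1 : ∫ x, (gKL t₀ - c * t₀ ^ 2) * ((p x + pd x) / 2) ∂μ = gKL t₀ - c * t₀ ^ 2 := by
    rw [integral_const_mul, integral_div, integral_add hpint hpdint, hp1, hpd1]
    norm_num
  have eL2 : ∫ x, c * ((p x - pd x) ^ 2 / (p x + pd x) / 2) ∂μ = c * (I / 2) := by
    rw [integral_const_mul, integral_div]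
  have eR : ∫ x, (p x * Real.log (p x / pd x) + pd x * Real.log (pd x / p x)) / 2 ∂μ
      = ∫ x, p x * Real.log (p x / pd x) ∂μ := by
    rw [integral_div, integral_add hID hIDd, ← hsym]
    ring
  rw [integral_add hintL1 hintL2, eL1, eL2, eR] at hmono
  have hmain : gKL t₀ ≤ ∫ x, p x * Real.log (p x / pd x) ∂μ := by
    have : c * (I / 2) = c * t₀ ^ 2 := by rw [ht2]; ring
    nlinarith [hmono]
  constructor
  · exact hmain
  · intro A St Sps hA hSt hSps
    rw [hSt, hSps]
    have : 2 * A * (1 / 2 * I) / (2 * A) = (1 / 2) * I := by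
      field_simp
    rw [this]
    exact mul_le_mul_of_nonneg_left hmain hA.le
end
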